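/- arXiv:1211.3349 — 3 statements merged into one kernel-verified Lean document; each statement's English description precedes it below -/
import Mathlib

section
/- Let α be a composition of n, let w ∈ 𝔖_n with D(w) = D(α), and let 1 ≤ i ≤ n−1. Then in ℤ[x_1,…,x_n]: (1) if ℓ(s_i w) < ℓ(w) then π̄_i(π̄_w(x_{D(α)})) = −π̄_w(x_{D(α)}); (2) if ℓ(s_i w) > ℓ(w) and D(s_i w) = D(α) then π̄_i(π̄_w(x_{D(α)})) = π̄_{s_i w}(x_{D(α)}); (3) if ℓ(s_i w) > ℓ(w) and D(s_i w) ≠ D(α) then π̄_i(π̄_w(x_{D(α)})) = 0. (This describes the 0-Hecke module structure of the summands in Theorem 4.4.) -/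
open MvPolynomial

/-- Value of a permutation of `Fin n` as a function `ℕ → ℕ` (0 outside range). -/
def pval {n : ℕ} (w : Equiv.Perm (Fin n)) (i : ℕ) : ℕ :=
  if h : i < n then (w ⟨i, h⟩ : ℕ) else 0

/-- 0-based descent set of `w`: `i ∈ permDes w` iff `w(i) > w(i+1)`, `0 ≤ i ≤ n-2`.
(This corresponds to the 1-based descent `i+1` of the paper.) -/
def permDes {n : ℕ} (w : Equiv.Perm (Fin n)) : Finset ℕ :=
  (Finset.range (n - 1)).filter fun i => pval w (i + 1) < pval w i

/-- Number of inversions = Coxeter length of `w`. -/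
def invNum {n : ℕ} (w : Equiv.Perm (Fin n)) : ℕ :=
  (Finset.univ.filter fun p : Fin n × Fin n => p.1 < p.2 ∧ w p.2 < w p.1).card

/-- The simple transposition `s_i = (i, i+1)` (0-based); identity if out of range. -/
def sw (n : ℕ) (i : ℕ) : Equiv.Perm (Fin n) :=
  if h : i + 1 < n then Equiv.swap ⟨i, Nat.lt_of_succ_lt h⟩ ⟨i + 1, h⟩ else 1

/-- Exponent vector of `x_I = ∏_{i ∈ I} (x_0 x_1 ⋯ x_i)`. -/
def expI (n : ℕ) (I : Finset ℕ) : Fin n → ℕ := fun j => (I.filter fun i => (j : ℕ) ≤ i).card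

/-- The monomial `x_I = ∏_{i ∈ I} (x_0 x_1 ⋯ x_i)`. -/
noncomputable def xI (R : Type*) [CommRing R] (n : ℕ) (I : Finset ℕ) :
    MvPolynomial (Fin n) R :=
  ∏ j : Fin n, (X j) ^ expI n I j

/-- `λ(d)`: the decreasing rearrangement of an exponent vector. -/
def lam {n : ℕ} (d : Fin n → ℕ) : List ℕ := (List.ofFn d).insertionSort (· ≥ ·)

/-- `x^d ≺ x^e` : `λ(d)` lexicographically smaller than `λ(e)`. -/
def monLT {n : ℕ} (d e : Fin n → ℕ) : Prop := List.Lex (· < ·) (lam d) (lam e)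

/-- 0-based descent set `D(α)` of a composition `α` of `n`:
`{α_1 + ⋯ + α_j - 1 : 1 ≤ j ≤ ℓ(α) - 1}` (0-based shift of the paper's `D(α)`). -/
def compDes {n : ℕ} (c : Composition n) : Finset ℕ :=
  (Finset.range (c.length - 1)).image fun j => c.sizeUpTo (j + 1) - 1

namespace St7

variable {n : ℕ}

lemma sw_def (i : ℕ) (h : i + 1 < n) :
    sw n i = Equiv.swap ⟨i, Nat.lt_of_succ_lt h⟩ ⟨i + 1, h⟩ := dif_pos h

lemma sw_mul_self (i : ℕ) : sw n i * sw n i = 1 := by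
  unfold sw; split
  · exact Equiv.swap_mul_self _ _
  · simp

lemma sw_inv (i : ℕ) : (sw n i)⁻¹ = sw n i := by
  rw [eq_comm, eq_inv_iff_mul_eq_one]; exact sw_mul_self i

lemma sw_val (i : ℕ) (h : i + 1 < n) (x : Fin n) :
    ((sw n i x : Fin n) : ℕ) = if (x : ℕ) = i then i + 1 else if (x : ℕ) = i + 1 then i else x := by
  rw [sw_def i h, Equiv.swap_apply_def]
  split_ifs with h1 h2 h3 h4 h5 <;>
    simp_all [Fin.ext_iff] <;> omega

lemma sw_apply_left (i : ℕ) (h : i + 1 < n) :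
    sw n i ⟨i, Nat.lt_of_succ_lt h⟩ = ⟨i + 1, h⟩ := by
  rw [sw_def i h]; exact Equiv.swap_apply_left _ _

lemma sw_apply_right (i : ℕ) (h : i + 1 < n) :
    sw n i ⟨i + 1, h⟩ = ⟨i, Nat.lt_of_succ_lt h⟩ := by
  rw [sw_def i h]; exact Equiv.swap_apply_right _ _

lemma sw_apply_ne (i : ℕ) (h : i + 1 < n) (x : Fin n) (h1 : (x : ℕ) ≠ i)
    (h2 : (x : ℕ) ≠ i + 1) : sw n i x = x := by
  apply Fin.ext; rw [sw_val i h]; simp [h1, h2]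

lemma invNum_inv (w : Equiv.Perm (Fin n)) : invNum w⁻¹ = invNum w := by
  unfold invNum
  apply Finset.card_bij' (fun p _ => (w⁻¹ p.2, w⁻¹ p.1)) (fun p _ => (w p.2, w p.1))
  · intro a ha
    simp only [Finset.mem_filter, Finset.mem_univ, true_and] at ha ⊢
    exact ⟨ha.2, by simpa using ha.1⟩
  · intro a ha
    simp only [Finset.mem_filter, Finset.mem_univ, true_and] at ha ⊢
    exact ⟨ha.2, by simpa using ha.1⟩
  · intro a ha; simp
  · intro a ha; simp

lemma invNum_mul_swap (u : Equiv.Perm (Fin n)) (p : ℕ) (hp : p + 1 < n)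
    (h : u ⟨p, Nat.lt_of_succ_lt hp⟩ < u ⟨p + 1, hp⟩) :
    invNum (u * sw n p) = invNum u + 1 := by
  classical
  set P : Fin n := ⟨p, Nat.lt_of_succ_lt hp⟩ with hP
  set P1 : Fin n := ⟨p + 1, hp⟩ with hP1
  have hsv : ∀ x : Fin n, ((sw n p x : Fin n) : ℕ)
      = if (x : ℕ) = p then p + 1 else if (x : ℕ) = p + 1 then p else x := sw_val p hp
  have hswP : sw n p P = P1 := sw_apply_left p hp
  have hswP1 : sw n p P1 = P := sw_apply_right p hp
  have OP : ∀ a b : Fin n, a < b → ¬(a = P ∧ b = P1) → sw n p a < sw n p b := by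
    intro a b hab hne
    rw [Fin.lt_def] at hab ⊢
    rw [hsv a, hsv b]
    simp only [Fin.ext_iff, hP, hP1, Fin.val_mk] at hne
    push_neg at hne
    split_ifs <;> omega
  have hinv : ∀ x : Fin n, sw n p (sw n p x) = x := by
    intro x
    have := congrFun (congrArg (fun (e : Equiv.Perm (Fin n)) => (e : Fin n → Fin n))
      (sw_mul_self (n := n) p)) x
    simpa [Equiv.Perm.mul_apply] using this
  have key : (Finset.univ.filter fun q : Fin n × Fin n =>
        q.1 < q.2 ∧ (u * sw n p) q.2 < (u * sw n p) q.1)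
      = insert (P, P1) ((Finset.univ.filter fun q : Fin n × Fin n =>
        q.1 < q.2 ∧ u q.2 < u q.1).image fun q => (sw n p q.1, sw n p q.2)) := by
    ext ⟨c, d⟩
    rw [Finset.mem_filter]
    simp only [Finset.mem_filter, Finset.mem_univ, true_and, Finset.mem_insert,
      Finset.mem_image, Equiv.Perm.mul_apply, Prod.mk.injEq, Prod.ext_iff]
    constructor
    · rintro ⟨hcd, hinv2⟩
      by_cases hc : c = P ∧ d = P1
      · left; exact hc
      · right
        refine ⟨(sw n p c, sw n p d), ⟨OP c d hcd hc, ?_⟩, by simp [hinv]⟩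
        simpa [hinv] using hinv2
    · rintro (⟨hc, hd⟩ | ⟨⟨a, b⟩, ⟨hab, hba⟩, h1, h2⟩)
      · subst hc; subst hd
        refine ⟨by simp [Fin.lt_def, hP, hP1], ?_⟩
        simpa [hswP, hswP1] using h
      · subst h1; subst h2
        constructor
        · apply OP a b hab
          rintro ⟨rfl, rfl⟩
          exact absurd hba (not_lt.2 h.le)
        · simpa [hinv] using hba
  rw [invNum, key, Finset.card_insert_of_notMem, Finset.card_image_of_injective]
  · rfl
  · intro q r hqr
    simp only [Prod.mk.injEq] at hqr
    have h1 : q.1 = r.1 := by rw [← hinv q.1, hqr.1, hinv]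
    have h2 : q.2 = r.2 := by rw [← hinv q.2, hqr.2, hinv]
    exact Prod.ext h1 h2
  · intro hmem
    rw [Finset.mem_image] at hmem
    obtain ⟨⟨a, b⟩, hq, habs⟩ := hmem
    rw [Finset.mem_filter] at hq
    obtain ⟨-, hab, hba⟩ := hq
    simp only [Prod.mk.injEq] at habs
    have ha : a = P1 := by rw [← hinv a, habs.1, hswP]
    have hb : b = P := by rw [← hinv b, habs.2, hswP1]
    subst ha; subst hb
    exact absurd hab (by simp [Fin.lt_def, hP, hP1])


lemma invNum_one : invNum (1 : Equiv.Perm (Fin n)) = 0 := by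
  unfold invNum
  rw [Finset.card_eq_zero]
  ext ⟨a, b⟩
  rw [Finset.mem_filter]
  simp only [Finset.mem_filter, Finset.mem_univ, true_and, Finset.notMem_empty, iff_false,
    Equiv.Perm.one_apply, not_and]
  exact fun h => not_lt.2 h.le

lemma invNum_mul_swap' (u : Equiv.Perm (Fin n)) (p : ℕ) (hp : p + 1 < n)
    (h : u ⟨p + 1, hp⟩ < u ⟨p, Nat.lt_of_succ_lt hp⟩) :
    invNum u = invNum (u * sw n p) + 1 := by
  have key := invNum_mul_swap (u * sw n p) p hp (by
    rw [Equiv.Perm.mul_apply, Equiv.Perm.mul_apply, sw_apply_left p hp, sw_apply_right p hp]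
    exact h)
  rwa [mul_assoc, sw_mul_self, mul_one] at key

lemma invNum_swap_mul (u : Equiv.Perm (Fin n)) (i : ℕ) (hi : i + 1 < n)
    (h : u.symm ⟨i, Nat.lt_of_succ_lt hi⟩ < u.symm ⟨i + 1, hi⟩) :
    invNum (sw n i * u) = invNum u + 1 := by
  have e : (sw n i * u)⁻¹ = u⁻¹ * sw n i := by rw [mul_inv_rev, sw_inv]
  have := invNum_mul_swap u⁻¹ i hi h
  rw [← invNum_inv u, ← this, ← e, invNum_inv]

lemma invNum_swap_mul' (u : Equiv.Perm (Fin n)) (i : ℕ) (hi : i + 1 < n)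
    (h : u.symm ⟨i + 1, hi⟩ < u.symm ⟨i, Nat.lt_of_succ_lt hi⟩) :
    invNum u = invNum (sw n i * u) + 1 := by
  have e : (sw n i * u)⁻¹ = u⁻¹ * sw n i := by rw [mul_inv_rev, sw_inv]
  have := invNum_mul_swap' u⁻¹ i hi h
  rw [← invNum_inv u, this, ← e, invNum_inv]

lemma left_dichotomy (u : Equiv.Perm (Fin n)) (i : ℕ) (hi : i + 1 < n) :
    (invNum (sw n i * u) = invNum u + 1
        ∧ u.symm ⟨i, Nat.lt_of_succ_lt hi⟩ < u.symm ⟨i + 1, hi⟩)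
      ∨ (invNum u = invNum (sw n i * u) + 1
        ∧ u.symm ⟨i + 1, hi⟩ < u.symm ⟨i, Nat.lt_of_succ_lt hi⟩) := by
  rcases lt_trichotomy (u.symm ⟨i, Nat.lt_of_succ_lt hi⟩) (u.symm ⟨i + 1, hi⟩) with h | h | h
  · exact Or.inl ⟨invNum_swap_mul u i hi h, h⟩
  · exfalso
    have := u.symm.injective h
    simp [Fin.ext_iff] at this
  · exact Or.inr ⟨invNum_swap_mul' u i hi h, h⟩

lemma descent_of_short (u : Equiv.Perm (Fin n)) (i : ℕ) (hi : i + 1 < n)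
    (h : invNum (sw n i * u) < invNum u) :
    invNum u = invNum (sw n i * u) + 1
      ∧ u.symm ⟨i + 1, hi⟩ < u.symm ⟨i, Nat.lt_of_succ_lt hi⟩ := by
  rcases left_dichotomy u i hi with ⟨h1, _⟩ | h1
  · omega
  · exact h1

lemma ascent_of_long (u : Equiv.Perm (Fin n)) (i : ℕ) (hi : i + 1 < n)
    (h : invNum u < invNum (sw n i * u)) :
    invNum (sw n i * u) = invNum u + 1
      ∧ u.symm ⟨i, Nat.lt_of_succ_lt hi⟩ < u.symm ⟨i + 1, hi⟩ := by
  rcases left_dichotomy u i hi with h1 | ⟨h1, _⟩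
  · exact h1
  · omega

lemma eq_one_of_no_descent (u : Equiv.Perm (Fin n))
    (h : ∀ (p : ℕ) (hp : p + 1 < n), u ⟨p, Nat.lt_of_succ_lt hp⟩ < u ⟨p + 1, hp⟩) :
    u = 1 := by
  have monoAux : ∀ (d : ℕ) (a b : Fin n), (b : ℕ) = (a : ℕ) + d + 1 → u a < u b := by
    intro d
    induction d with
    | zero =>
      intro a b hd
      have hb : (a : ℕ) + 1 < n := by have := b.isLt; omega
      have := h (a : ℕ) hb
      rwa [Fin.eta, show (⟨(a : ℕ) + 1, hb⟩ : Fin n) = b from Fin.ext (by simp; omega)] at this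
    | succ d ihd =>
      intro a b hd
      have hc : (a : ℕ) + d + 1 < n := by have := b.isLt; omega
      have h1 := ihd a ⟨(a : ℕ) + d + 1, hc⟩ rfl
      have hb2 : ((a : ℕ) + d + 1) + 1 < n := by have := b.isLt; omega
      have h2 := h ((a : ℕ) + d + 1) hb2
      rw [show (⟨(a : ℕ) + d + 1 + 1, hb2⟩ : Fin n) = b from Fin.ext (by simp; omega)] at h2
      exact h1.trans h2
  have mono : ∀ a b : Fin n, a < b → u a < u b := by
    intro a b hab
    rw [Fin.lt_def] at hab
    exact monoAux ((b : ℕ) - (a : ℕ) - 1) a b (by omega)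
  have monoInv : StrictMono u.symm := by
    intro a b hab
    rcases lt_trichotomy (u.symm a) (u.symm b) with h1 | h1 | h1
    · exact h1
    · exact absurd (u.symm.injective (Fin.ext (by rw [h1]))) hab.ne
    · have := mono _ _ h1
      simp only [Equiv.apply_symm_apply] at this
      exact absurd hab (not_lt.2 this.le)
  have le1 : ∀ (m : ℕ) (hm : m < n), m ≤ (u ⟨m, hm⟩ : ℕ) := by
    intro m
    induction m with
    | zero => intro _; exact Nat.zero_le _
    | succ k ihk =>
      intro hm
      have hk : k < n := by omega
      have h1 := mono ⟨k, hk⟩ ⟨k + 1, hm⟩ (by simp [Fin.lt_def])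
      have := ihk hk
      rw [Fin.lt_def] at h1
      omega
  have le2 : ∀ (m : ℕ) (hm : m < n), m ≤ (u.symm ⟨m, hm⟩ : ℕ) := by
    intro m
    induction m with
    | zero => intro _; exact Nat.zero_le _
    | succ k ihk =>
      intro hm
      have hk : k < n := by omega
      have h1 := monoInv (show (⟨k, hk⟩ : Fin n) < ⟨k + 1, hm⟩ by simp [Fin.lt_def])
      have := ihk hk
      rw [Fin.lt_def] at h1
      omega
  apply Equiv.ext
  intro x
  have h1 := le1 x x.isLt
  have h2 := le2 (u ⟨x, x.isLt⟩) (u _).isLt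
  simp only [Fin.eta, Equiv.symm_apply_apply] at h1 h2
  rw [Equiv.Perm.one_apply]
  exact Fin.ext (by omega)

lemma exists_descent (u : Equiv.Perm (Fin n)) (hu : u ≠ 1) :
    ∃ p, ∃ hp : p + 1 < n, u ⟨p + 1, hp⟩ < u ⟨p, Nat.lt_of_succ_lt hp⟩ := by
  by_contra hc
  push_neg at hc
  apply hu
  apply eq_one_of_no_descent
  intro p hp
  have h1 := hc p hp
  rcases lt_trichotomy (u ⟨p, Nat.lt_of_succ_lt hp⟩) (u ⟨p + 1, hp⟩) with h | h | h
  · exact h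
  · exact absurd (u.injective h) (by simp [Fin.ext_iff])
  · omega

lemma exists_reduced : ∀ (k : ℕ) (u : Equiv.Perm (Fin n)), invNum u = k →
    ∃ m : List ℕ, (∀ j ∈ m, j + 1 < n) ∧ (m.map (sw n)).prod = u ∧ m.length = invNum u := by
  intro k
  induction k using Nat.strong_induction_on with
  | _ k ih =>
    intro u hk
    by_cases hu : u = 1
    · exact ⟨[], by simp, by simp [hu], by simp [hu, invNum_one]⟩
    · obtain ⟨p, hp, hdes⟩ := exists_descent u hu
      have hlen := invNum_mul_swap' u p hp hdes
      obtain ⟨m', hm'val, hm'prod, hm'len⟩ :=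
        ih (invNum (u * sw n p)) (by omega) (u * sw n p) rfl
      refine ⟨m' ++ [p], ?_, ?_, ?_⟩
      · intro j hj
        rcases List.mem_append.1 hj with h | h
        · exact hm'val j h
        · simp at h; omega
      · rw [List.map_append, List.prod_append, hm'prod]
        simp [mul_assoc, sw_mul_self]
      · rw [List.length_append, hm'len]
        simp [hlen]

lemma invNum_prod_le (m : List ℕ) (hval : ∀ j ∈ m, j + 1 < n) :
    invNum ((m.map (sw n)).prod) ≤ m.length := by
  induction m with
  | nil => simp [invNum_one]
  | cons i t iht =>
    have hi : i + 1 < n := hval i (by simp)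
    have ht := iht (fun j hj => hval j (by simp [hj]))
    rw [List.map_cons, List.prod_cons, List.length_cons]
    rcases left_dichotomy ((t.map (sw n)).prod) i hi with ⟨h1, _⟩ | ⟨h1, _⟩ <;> omega


abbrev Pol (n : ℕ) := MvPolynomial (Fin n) ℤ

def Hyp (n : ℕ) (dem : ℕ → Pol n → Pol n) : Prop :=
  ∀ (i : ℕ) (hi : i + 1 < n) (f : Pol n),
    (X (⟨i, Nat.lt_of_succ_lt hi⟩ : Fin n) - X ⟨i + 1, hi⟩) * dem i f
      = X (⟨i, Nat.lt_of_succ_lt hi⟩ : Fin n) * f - X ⟨i + 1, hi⟩ * rename (sw n i) f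

variable {dem : ℕ → Pol n → Pol n}

lemma Xne (i : ℕ) (hi : i + 1 < n) :
    (X (⟨i, Nat.lt_of_succ_lt hi⟩ : Fin n) - X ⟨i + 1, hi⟩ : Pol n) ≠ 0 := by
  rw [sub_ne_zero]
  intro h
  have := MvPolynomial.X_injective h
  simp [Fin.ext_iff] at this

lemma cancel (i : ℕ) (hi : i + 1 < n) {g h : Pol n}
    (he : (X (⟨i, Nat.lt_of_succ_lt hi⟩ : Fin n) - X ⟨i + 1, hi⟩) * g
      = (X (⟨i, Nat.lt_of_succ_lt hi⟩ : Fin n) - X ⟨i + 1, hi⟩) * h) : g = h :=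
  mul_left_cancel₀ (Xne i hi) he

lemma sw_coe_comp (i : ℕ) : (⇑(sw n i) ∘ ⇑(sw n i)) = id := by
  funext x
  have := congrFun (congrArg (fun (e : Equiv.Perm (Fin n)) => (e : Fin n → Fin n))
    (sw_mul_self (n := n) i)) x
  simpa using this

lemma rename_sw_sw (i : ℕ) (f : Pol n) :
    rename (sw n i) (rename (sw n i) f) = f := by
  rw [rename_rename, sw_coe_comp, rename_id, AlgHom.id_apply]

lemma demAdd (hdem : Hyp n dem) (i : ℕ) (hi : i + 1 < n) (f g : Pol n) :
    dem i (f + g) = dem i f + dem i g := by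
  apply cancel i hi
  rw [mul_add, hdem i hi, hdem i hi, hdem i hi, map_add]
  ring

lemma demZero (hdem : Hyp n dem) (i : ℕ) (hi : i + 1 < n) : dem i (0 : Pol n) = 0 := by
  apply cancel i hi
  rw [hdem i hi, map_zero]
  ring

lemma demSub (hdem : Hyp n dem) (i : ℕ) (hi : i + 1 < n) (f g : Pol n) :
    dem i (f - g) = dem i f - dem i g := by
  apply cancel i hi
  rw [mul_sub, hdem i hi, hdem i hi, hdem i hi, map_sub]
  ring

lemma rename_sw_dem (hdem : Hyp n dem) (i : ℕ) (hi : i + 1 < n) (f : Pol n) :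
    rename (sw n i) (dem i f) = dem i f := by
  apply cancel i hi
  have h0 := hdem i hi f
  have h1 := congrArg (rename (sw n i)) h0
  rw [map_mul, map_sub, map_sub, map_mul, map_mul, rename_X, rename_X,
    sw_apply_left i hi, sw_apply_right i hi, rename_sw_sw] at h1
  rw [h0]
  linear_combination -h1

lemma dem_idem (hdem : Hyp n dem) (i : ℕ) (hi : i + 1 < n) (f : Pol n) :
    dem i (dem i f) = dem i f := by
  apply cancel i hi
  rw [hdem i hi, rename_sw_dem hdem i hi]
  ring

lemma dem_of_symm (hdem : Hyp n dem) (i : ℕ) (hi : i + 1 < n) (f : Pol n)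
    (h : rename (sw n i) f = f) : dem i f = f := by
  apply cancel i hi
  rw [hdem i hi, h]
  ring


lemma Xne' (x y : Fin n) (h : x ≠ y) : (X x - X y : Pol n) ≠ 0 := by
  rw [sub_ne_zero]
  exact fun hc => h (MvPolynomial.X_injective hc)

lemma sw_invalid (i : ℕ) (h : ¬ i + 1 < n) : sw n i = 1 := dif_neg h

lemma sw_commute (i j : ℕ) (hij : i + 2 ≤ j ∨ j + 2 ≤ i) :
    sw n i * sw n j = sw n j * sw n i := by
  by_cases hi : i + 1 < n
  · by_cases hj : j + 1 < n
    · have hdisj : (sw n i).Disjoint (sw n j) := by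
        intro x
        by_cases hx : (x : ℕ) = i ∨ (x : ℕ) = i + 1
        · right; exact sw_apply_ne j hj x (by omega) (by omega)
        · left; push_neg at hx; exact sw_apply_ne i hi x hx.1 hx.2
      exact hdisj.commute.eq
    · rw [sw_invalid j hj, mul_one, one_mul]
  · rw [sw_invalid i hi, mul_one, one_mul]

lemma rename_comp_comm (i j : ℕ) (hij : i + 2 ≤ j ∨ j + 2 ≤ i) (f : Pol n) :
    rename (sw n i) (rename (sw n j) f) = rename (sw n j) (rename (sw n i) f) := by
  rw [rename_rename, rename_rename, ← Equiv.Perm.coe_mul, ← Equiv.Perm.coe_mul,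
    sw_commute i j hij]

lemma rename_sw_X_ne (k i : ℕ) (hk : k < n) (h1 : k ≠ i) (h2 : k ≠ i + 1) :
    rename (sw n i) (X ⟨k, hk⟩ : Pol n) = X ⟨k, hk⟩ := by
  by_cases hi : i + 1 < n
  · rw [rename_X, sw_apply_ne i hi _ h1 h2]
  · rw [rename_X, sw_invalid i hi, Equiv.Perm.one_apply]

lemma rename_dem_comm (hdem : Hyp n dem) (i j : ℕ) (hj : j + 1 < n)
    (hij : i + 2 ≤ j ∨ j + 2 ≤ i) (f : Pol n) :
    rename (sw n i) (dem j f) = dem j (rename (sw n i) f) := by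
  apply cancel j hj
  have h1 := congrArg (rename (sw n i)) (hdem j hj f)
  rw [map_mul, map_sub, map_sub, map_mul, map_mul,
    rename_sw_X_ne j i (Nat.lt_of_succ_lt hj) (by omega) (by omega),
    rename_sw_X_ne (j+1) i hj (by omega) (by omega),
    rename_comp_comm i j hij] at h1
  rw [hdem j hj (rename (sw n i) f)]
  exact h1

lemma dem_comm (hdem : Hyp n dem) (i j : ℕ) (hi : i + 1 < n) (hj : j + 1 < n)
    (hij : i + 2 ≤ j ∨ j + 2 ≤ i) (f : Pol n) :
    dem i (dem j f) = dem j (dem i f) := by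
  apply cancel i hi
  apply cancel j hj
  have h1 := hdem i hi f
  have h2 := hdem j hj f
  have h3 := hdem i hi (dem j f)
  have r3 := rename_dem_comm hdem i j hj hij f
  rw [r3] at h3
  have h4 := hdem j hj (rename (sw n i) f)
  have h5 := hdem j hj (dem i f)
  have r5 := rename_dem_comm hdem j i hi (hij.symm) f
  rw [r5] at h5
  have h6 := hdem i hi (rename (sw n j) f)
  have hcm := rename_comp_comm i j hij f
  rw [hcm] at h6
  set a : Pol n := X ⟨i, Nat.lt_of_succ_lt hi⟩
  set b : Pol n := X ⟨i + 1, hi⟩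
  set c : Pol n := X ⟨j, Nat.lt_of_succ_lt hj⟩
  set d : Pol n := X ⟨j + 1, hj⟩
  linear_combination (c - d) * h3 + a * h2 - b * h4 - (a - b) * h5 - c * h1 + d * h6

lemma sw_braid (i : ℕ) (h2 : i + 2 < n) :
    sw n i * sw n (i + 1) * sw n i = sw n (i + 1) * sw n i * sw n (i + 1) := by
  have hi : i + 1 < n := Nat.lt_of_succ_lt h2
  set Pi : Fin n := ⟨i, Nat.lt_of_succ_lt hi⟩ with hPi
  set Pj : Fin n := ⟨i + 1, hi⟩ with hPj
  set Pk : Fin n := ⟨i + 2, h2⟩ with hPk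
  have e1 : sw n i = Equiv.swap Pi Pj := sw_def i hi
  have e2 : sw n (i + 1) = Equiv.swap Pj Pk := sw_def (i + 1) h2
  have hkj : Pk ≠ Pj := by simp [hPk, hPj, Fin.ext_iff]
  have hki : Pk ≠ Pi := by simp [hPk, hPi, Fin.ext_iff]
  have hij : Pi ≠ Pj := by simp [hPi, hPj, Fin.ext_iff]
  have hL : Equiv.swap Pi Pj * Equiv.swap Pj Pk * Equiv.swap Pi Pj = Equiv.swap Pi Pk := by
    rw [Equiv.swap_comm Pi Pj, Equiv.swap_comm Pj Pk]
    exact Equiv.swap_mul_swap_mul_swap hkj hki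
  have hR : Equiv.swap Pj Pk * Equiv.swap Pi Pj * Equiv.swap Pj Pk = Equiv.swap Pi Pk :=
    (Equiv.swap_mul_swap_mul_swap hij hki.symm).trans (Equiv.swap_comm _ _)
  rw [e1, e2, hL, hR]

lemma rename_braid (i : ℕ) (h2 : i + 2 < n) (f : Pol n) :
    rename (sw n i) (rename (sw n (i+1)) (rename (sw n i) f))
      = rename (sw n (i+1)) (rename (sw n i) (rename (sw n (i+1)) f)) := by
  rw [rename_rename, rename_rename, rename_rename, rename_rename,
    ← Equiv.Perm.coe_mul, ← Equiv.Perm.coe_mul, ← Equiv.Perm.coe_mul, ← Equiv.Perm.coe_mul,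
    sw_braid i h2]

lemma dem_braid (hdem : Hyp n dem) (i : ℕ) (h2 : i + 2 < n) (f : Pol n) :
    dem i (dem (i+1) (dem i f)) = dem (i+1) (dem i (dem (i+1) f)) := by
  have hi : i + 1 < n := Nat.lt_of_succ_lt h2
  set a : Pol n := X ⟨i, Nat.lt_of_succ_lt hi⟩ with ha
  set b : Pol n := X ⟨i + 1, hi⟩ with hb
  set c : Pol n := X ⟨i + 1 + 1, h2⟩ with hc
  have hab : b = X ⟨i + 1, Nat.lt_of_succ_lt h2⟩ := rfl
  -- renaming maps
  have sa : rename (sw n i) (a : Pol n) = b := by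
    rw [ha, rename_X, sw_apply_left i hi]
  have sb : rename (sw n i) (b : Pol n) = a := by
    rw [hb, rename_X, sw_apply_right i hi]
  have sc : rename (sw n i) (c : Pol n) = c := by
    rw [hc]; exact rename_sw_X_ne (i+1+1) i h2 (by omega) (by omega)
  have ta : rename (sw n (i+1)) (a : Pol n) = a := by
    rw [ha]; exact rename_sw_X_ne i (i+1) (Nat.lt_of_succ_lt hi) (by omega) (by omega)
  have tb : rename (sw n (i+1)) (b : Pol n) = c := by
    rw [hab, hc, rename_X, sw_apply_left (i+1) h2]
  have tc : rename (sw n (i+1)) (c : Pol n) = b := by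
    rw [hab, hc, rename_X, sw_apply_right (i+1) h2]
  set s : Pol n → Pol n := fun g => rename (sw n i) g with hs
  set t : Pol n → Pol n := fun g => rename (sw n (i+1)) g with ht
  set g := dem i f
  set h := dem (i+1) g
  set L := dem i h
  set gp := dem (i+1) f
  set hp := dem i gp
  set R := dem (i+1) hp
  have E1 : (a - b) * g = a * f - b * s f := hdem i hi f
  have E2 : (b - c) * h = b * g - c * t g := hdem (i+1) h2 g
  have E3 : (a - b) * L = a * h - b * s h := hdem i hi h
  have E4 : (a - c) * s h = a * g - c * s (t g) := by
    have := congrArg (rename (sw n i)) E2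
    rw [map_mul, map_sub, map_sub, map_mul, map_mul, sb, sc] at this
    rw [hs]
    simp only [map_sub, map_mul] at this ⊢
    rw [show (rename (sw n i)) g = g from rename_sw_dem hdem i hi f] at this
    exact this
  have E5 : (a - c) * t g = a * t f - c * t (s f) := by
    have := congrArg (rename (sw n (i+1))) E1
    rw [map_mul, map_sub, map_sub, map_mul, map_mul, ta, tb] at this
    exact this
  have E6 : (b - c) * s (t g) = b * s (t f) - c * s (t (s f)) := by
    have := congrArg (rename (sw n i)) E5
    rw [map_mul, map_sub, map_sub, map_mul, map_mul, sa, sc] at this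
    exact this
  have F1 : (b - c) * gp = b * f - c * t f := hdem (i+1) h2 f
  have F2 : (a - b) * hp = a * gp - b * s gp := hdem i hi gp
  have F3 : (b - c) * R = b * hp - c * t hp := hdem (i+1) h2 hp
  have F4 : (a - c) * t hp = a * gp - c * t (s gp) := by
    have := congrArg (rename (sw n (i+1))) F2
    rw [map_mul, map_sub, map_sub, map_mul, map_mul, ta, tb] at this
    rw [show (rename (sw n (i+1))) gp = gp from rename_sw_dem hdem (i+1) h2 f] at this
    exact this
  have F5 : (a - c) * s gp = a * s f - c * s (t f) := by
    have := congrArg (rename (sw n i)) F1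
    rw [map_mul, map_sub, map_sub, map_mul, map_mul, sb, sc] at this
    exact this
  have F6 : (a - b) * t (s gp) = a * t (s f) - b * t (s (t f)) := by
    have := congrArg (rename (sw n (i+1))) F5
    rw [map_mul, map_sub, map_sub, map_mul, map_mul, ta, tc] at this
    exact this
  have HB : s (t (s f)) = t (s (t f)) := rename_braid i h2 f
  set K : Pol n := (a - b) * (b - c) * (a - c) with hK
  have SA : K * L = a * (a-c) * (b * g - c * t g) - b * (b-c) * (a * g - c * s (t g)) := by
    rw [hK]
    linear_combination (b-c) * (a-c) * E3 + a * (a-c) * E2 - b * (b-c) * E4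
  have SB : K * (a * (a-c) * (b * g - c * t g) - b * (b-c) * (a * g - c * s (t g)))
      = K * (a^2*b*f - a*b^2*(s f) - a^2*c*(t f) + a*c^2*(t (s f)) + b^2*c*(s (t f))
          - b*c^2*(s (t (s f)))) := by
    rw [hK]
    linear_combination (a*b*(a-b)*(b-c)*(a-c)) * E1 - (a*c*(a-b)*(b-c)*(a-c)) * E5
      + (b*c*(a-b)*(b-c)*(a-c)) * E6
  have SA' : K * R = b * (a-c) * (a * gp - b * s gp) - c * (a-b) * (a * gp - c * t (s gp)) := by
    rw [hK]
    linear_combination (a-b) * (a-c) * F3 + b * (a-c) * F2 - c * (a-b) * F4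
  have SB' : K * (b * (a-c) * (a * gp - b * s gp) - c * (a-b) * (a * gp - c * t (s gp)))
      = K * (a^2*b*f - a*b^2*(s f) - a^2*c*(t f) + a*c^2*(t (s f)) + b^2*c*(s (t f))
          - b*c^2*(t (s (t f)))) := by
    rw [hK]
    linear_combination (a^2*(a-b)*(b-c)*(a-c)) * F1 - (b^2*(a-b)*(b-c)*(a-c)) * F5
      + (c^2*(a-b)*(b-c)*(a-c)) * F6
  have final : K^2 * L = K^2 * R := by
    linear_combination K * SA + SB - K * SA' - SB' - b*c^2*K*HB
  have hKne : K^2 ≠ 0 := by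
    rw [hK]
    apply pow_ne_zero
    apply mul_ne_zero (mul_ne_zero ?_ ?_) ?_
    · exact Xne' _ _ (by simp [Fin.ext_iff])
    · exact Xne' _ _ (by simp [Fin.ext_iff])
    · exact Xne' _ _ (by simp [Fin.ext_iff]; omega)
  exact mul_left_cancel₀ hKne final


lemma T_quad (hdem : Hyp n dem) (i : ℕ) (hi : i + 1 < n) (f : Pol n) :
    dem i (dem i f - f) - (dem i f - f) = -(dem i f - f) := by
  rw [demSub hdem i hi, dem_idem hdem i hi]
  ring

lemma T_comm (hdem : Hyp n dem) (i j : ℕ) (hi : i + 1 < n) (hj : j + 1 < n)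
    (hij : i + 2 ≤ j ∨ j + 2 ≤ i) (g : Pol n) :
    dem i (dem j g - g) - (dem j g - g) = dem j (dem i g - g) - (dem i g - g) := by
  rw [demSub hdem i hi, demSub hdem j hj, dem_comm hdem i j hi hj hij g]
  ring

lemma T_braid (hdem : Hyp n dem) (i : ℕ) (h2 : i + 2 < n) (g : Pol n) :
    dem i (dem (i+1) (dem i g - g) - (dem i g - g))
        - (dem (i+1) (dem i g - g) - (dem i g - g))
      = dem (i+1) (dem i (dem (i+1) g - g) - (dem (i+1) g - g))
        - (dem i (dem (i+1) g - g) - (dem (i+1) g - g)) := by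
  have hi : i + 1 < n := Nat.lt_of_succ_lt h2
  simp only [demSub hdem i hi, demSub hdem (i+1) h2]
  rw [dem_idem hdem i hi, dem_idem hdem (i+1) h2, dem_braid hdem i h2]
  ring

lemma mul_symm_apply (σ τ : Equiv.Perm (Fin n)) (x : Fin n) :
    (σ * τ).symm x = τ.symm (σ.symm x) := rfl

lemma sw_symm_apply (j : ℕ) (x : Fin n) : (sw n j).symm x = sw n j x := by
  have h := sw_inv (n := n) j
  calc (sw n j).symm x = (sw n j)⁻¹ x := rfl
  _ = sw n j x := by rw [h]

lemma symm_swap_mul_apply (j : ℕ) (w : Equiv.Perm (Fin n)) (x : Fin n) :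
    (sw n j * w).symm x = w.symm (sw n j x) := by
  rw [mul_symm_apply, sw_symm_apply]

lemma word_indep (hdem : Hyp n dem) : ∀ (k : ℕ) (w : Equiv.Perm (Fin n)) (l l' : List ℕ),
    (∀ j ∈ l, j + 1 < n) → (∀ j ∈ l', j + 1 < n) →
    (l.map (sw n)).prod = w → (l'.map (sw n)).prod = w →
    l.length = k → l'.length = k → invNum w = k →
    ∀ x : Pol n, l.foldr (fun j f => dem j f - f) x = l'.foldr (fun j f => dem j f - f) x := by
  intro k
  induction k using Nat.strong_induction_on with
  | _ k IH =>
  intro w l l' hlval hl'val hlprod hl'prod hllen hl'len hinv x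
  match k, l, l', hllen, hl'len with
  | 0, l, l', hllen, hl'len =>
    rw [List.length_eq_zero_iff.mp hllen, List.length_eq_zero_iff.mp hl'len]
  | k+1, [], l', hllen, hl'len => simp at hllen
  | k+1, i::a, [], hllen, hl'len => simp at hl'len
  | k+1, i::a, j::b, hllen, hl'len =>
  have hi : i + 1 < n := hlval i List.mem_cons_self
  have hj : j + 1 < n := hl'val j List.mem_cons_self
  have haval : ∀ y ∈ a, y + 1 < n := fun y hy => hlval y (List.mem_cons_of_mem _ hy)
  have hbval : ∀ y ∈ b, y + 1 < n := fun y hy => hl'val y (List.mem_cons_of_mem _ hy)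
  rw [List.map_cons, List.prod_cons] at hlprod hl'prod
  have haprod : (a.map (sw n)).prod = sw n i * w := by
    rw [← hlprod, ← mul_assoc, sw_mul_self, one_mul]
  have hbprod : (b.map (sw n)).prod = sw n j * w := by
    rw [← hl'prod, ← mul_assoc, sw_mul_self, one_mul]
  have halen : a.length = k := by simpa using hllen
  have hblen : b.length = k := by simpa using hl'len
  have hinva : invNum (sw n i * w) = k := by
    have h1 : invNum (sw n i * w) ≤ k := by
      rw [← haprod, ← halen]; exact invNum_prod_le a haval
    rcases left_dichotomy w i hi with ⟨h2, _⟩ | ⟨h2, _⟩ <;> omega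
  have hinvb : invNum (sw n j * w) = k := by
    have h1 : invNum (sw n j * w) ≤ k := by
      rw [← hbprod, ← hblen]; exact invNum_prod_le b hbval
    rcases left_dichotomy w j hj with ⟨h2, _⟩ | ⟨h2, _⟩ <;> omega
  have hdesci : w.symm ⟨i + 1, hi⟩ < w.symm ⟨i, Nat.lt_of_succ_lt hi⟩ :=
    (descent_of_short w i hi (by omega)).2
  have hdescj : w.symm ⟨j + 1, hj⟩ < w.symm ⟨j, Nat.lt_of_succ_lt hj⟩ :=
    (descent_of_short w j hj (by omega)).2
  simp only [List.foldr_cons]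
  by_cases hij : i = j
  · subst hij
    rw [IH k (Nat.lt_succ_self k) (sw n i * w) a b haval hbval haprod hbprod halen hblen hinva x]
  · by_cases hcase : i + 2 ≤ j ∨ j + 2 ≤ i
    · -- commuting case
      set u := sw n i * (sw n j * w) with hu
      have hdisw : (sw n j * w).symm ⟨i + 1, hi⟩
          < (sw n j * w).symm ⟨i, Nat.lt_of_succ_lt hi⟩ := by
        rw [symm_swap_mul_apply, symm_swap_mul_apply,
          sw_apply_ne j hj _ (show i + 1 ≠ j by omega) (show i + 1 ≠ j + 1 by omega),
          sw_apply_ne j hj _ (show i ≠ j by omega) (show i ≠ j + 1 by omega)]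
        exact hdesci
      have hiu : invNum (sw n j * w) = invNum u + 1 :=
        invNum_swap_mul' (sw n j * w) i hi hdisw
      obtain ⟨m, hmval, hmprod, hmlen⟩ := exists_reduced (invNum u) u rfl
      have swcomm : sw n i * sw n j = sw n j * sw n i := sw_commute i j hcase
      have hprod_jm : (((j::m)).map (sw n)).prod = sw n i * w := by
        rw [List.map_cons, List.prod_cons, hmprod, hu, ← mul_assoc, ← swcomm, mul_assoc,
          ← mul_assoc (sw n j) (sw n j) w, sw_mul_self, one_mul]
      have hprod_im : (((i::m)).map (sw n)).prod = sw n j * w := by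
        rw [List.map_cons, List.prod_cons, hmprod, hu, ← mul_assoc, sw_mul_self, one_mul]
      have hval_jm : ∀ y ∈ j::m, y + 1 < n := by
        intro y hy
        rcases List.mem_cons.mp hy with rfl | hy'
        · exact hj
        · exact hmval y hy'
      have hval_im : ∀ y ∈ i::m, y + 1 < n := by
        intro y hy
        rcases List.mem_cons.mp hy with rfl | hy'
        · exact hi
        · exact hmval y hy'
      have hlen_jm : (j::m).length = k := by
        rw [List.length_cons, hmlen]; omega
      have hlen_im : (i::m).length = k := by
        rw [List.length_cons, hmlen]; omega
      have e_a := IH k (Nat.lt_succ_self k) (sw n i * w) a (j::m) haval hval_jm haprod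
        hprod_jm halen hlen_jm hinva x
      have e_b := IH k (Nat.lt_succ_self k) (sw n j * w) b (i::m) hbval hval_im hbprod
        hprod_im hblen hlen_im hinvb x
      rw [e_a, e_b]
      simp only [List.foldr_cons]
      exact T_comm hdem i j hi hj hcase _
    · -- braid case
      have hbr : j = i + 1 ∨ i = j + 1 := by omega
      have key : ∀ (i j : ℕ) (a b : List ℕ), j = i + 1 →
          ∀ (hi : i + 1 < n) (hj : j + 1 < n),
          (∀ y ∈ a, y + 1 < n) → (∀ y ∈ b, y + 1 < n) →
          (a.map (sw n)).prod = sw n i * w → (b.map (sw n)).prod = sw n j * w →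
          a.length = k → b.length = k →
          invNum (sw n i * w) = k → invNum (sw n j * w) = k →
          w.symm ⟨i + 1, hi⟩ < w.symm ⟨i, Nat.lt_of_succ_lt hi⟩ →
          w.symm ⟨j + 1, hj⟩ < w.symm ⟨j, Nat.lt_of_succ_lt hj⟩ →
          dem i (a.foldr (fun j f => dem j f - f) x) - a.foldr (fun j f => dem j f - f) x
            = dem j (b.foldr (fun j f => dem j f - f) x)
              - b.foldr (fun j f => dem j f - f) x := by
        clear hdesci hdescj hinva hinvb halen hblen haprod hbprod haval hbval hlprod hl'prod
          hcase hij hi hj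
        intro i j a b hj2 hi hj haval hbval haprod hbprod halen hblen hinva hinvb hdi hdj
        subst hj2
        have h2 : i + 1 + 1 < n := hj
        -- descent of s_i w at position i+1
        have eA : (sw n i * w).symm ⟨i + 1 + 1, h2⟩ = w.symm ⟨i + 1 + 1, h2⟩ := by
          rw [symm_swap_mul_apply,
            sw_apply_ne i hi _ (show i + 1 + 1 ≠ i by omega) (show i + 1 + 1 ≠ i + 1 by omega)]
        have eB : (sw n i * w).symm ⟨i + 1, Nat.lt_of_succ_lt h2⟩
            = w.symm ⟨i, Nat.lt_of_succ_lt hi⟩ := by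
          rw [symm_swap_mul_apply]
          congr 1
          exact sw_apply_right i hi
        have d3 : (sw n i * w).symm ⟨i + 1 + 1, h2⟩
            < (sw n i * w).symm ⟨i + 1, Nat.lt_of_succ_lt h2⟩ := by
          rw [eA, eB]; exact hdj.trans hdi
        have e_v2 : invNum (sw n i * w) = invNum (sw n (i+1) * (sw n i * w)) + 1 :=
          invNum_swap_mul' _ (i+1) h2 d3
        set v2 := sw n (i+1) * (sw n i * w) with hv2
        have eC : v2.symm ⟨i + 1, hi⟩ = w.symm ⟨i + 1 + 1, h2⟩ := by
          rw [hv2, symm_swap_mul_apply, symm_swap_mul_apply]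
          congr 1
          rw [show sw n (i+1) ⟨i+1, hi⟩ = ⟨i+1+1, h2⟩ from sw_apply_left (i+1) h2]
          exact sw_apply_ne i hi _ (show i + 1 + 1 ≠ i by omega) (show i + 1 + 1 ≠ i + 1 by omega)
        have eD : v2.symm ⟨i, Nat.lt_of_succ_lt hi⟩ = w.symm ⟨i + 1, hi⟩ := by
          rw [hv2, symm_swap_mul_apply, symm_swap_mul_apply]
          congr 1
          rw [sw_apply_ne (i+1) h2 _ (show i ≠ i + 1 by omega) (show i ≠ i + 1 + 1 by omega)]
          exact sw_apply_left i hi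
        have d4 : v2.symm ⟨i + 1, hi⟩ < v2.symm ⟨i, Nat.lt_of_succ_lt hi⟩ := by
          rw [eC, eD]; exact hdj
        have e_u : invNum v2 = invNum (sw n i * v2) + 1 := invNum_swap_mul' v2 i hi d4
        set u := sw n i * v2 with hu
        obtain ⟨m, hmval, hmprod, hmlen⟩ := exists_reduced (invNum u) u rfl
        have hprod1 : (((i+1)::i::m).map (sw n)).prod = sw n i * w := by
          rw [List.map_cons, List.map_cons, List.prod_cons, List.prod_cons, hmprod, hu,
            ← mul_assoc (sw n i) (sw n i) v2, sw_mul_self, one_mul, hv2,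
            ← mul_assoc, sw_mul_self, one_mul]
        have hprod2 : ((i::(i+1)::m).map (sw n)).prod = sw n (i+1) * w := by
          rw [List.map_cons, List.map_cons, List.prod_cons, List.prod_cons, hmprod, hu, hv2]
          rw [← mul_assoc, ← mul_assoc, ← mul_assoc, ← mul_assoc, sw_braid i h2]
          rw [mul_assoc (sw n (i+1) * sw n i), sw_mul_self, mul_one,
            mul_assoc (sw n (i+1)) (sw n i) (sw n i), sw_mul_self, mul_one]
        have hval1 : ∀ y ∈ (i+1)::i::m, y + 1 < n := by
          intro y hy
          rcases List.mem_cons.mp hy with rfl | hy'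
          · exact h2
          · rcases List.mem_cons.mp hy' with rfl | hy''
            · exact hi
            · exact hmval y hy''
        have hval2 : ∀ y ∈ i::(i+1)::m, y + 1 < n := by
          intro y hy
          rcases List.mem_cons.mp hy with rfl | hy'
          · exact hi
          · rcases List.mem_cons.mp hy' with rfl | hy''
            · exact h2
            · exact hmval y hy''
        have hlen1 : ((i+1)::i::m).length = k := by
          rw [List.length_cons, List.length_cons, hmlen]; omega
        have hlen2 : (i::(i+1)::m).length = k := by
          rw [List.length_cons, List.length_cons, hmlen]; omega
        have e_a := IH k (Nat.lt_succ_self k) (sw n i * w) a ((i+1)::i::m) haval hval1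
          haprod hprod1 halen hlen1 hinva x
        have e_b := IH k (Nat.lt_succ_self k) (sw n (i+1) * w) b (i::(i+1)::m) hbval hval2
          hbprod hprod2 hblen hlen2 hinvb x
        rw [e_a, e_b]
        simp only [List.foldr_cons]
        exact T_braid hdem i h2 _
      rcases hbr with hbr | hbr
      · exact key i j a b hbr hi hj haval hbval haprod hbprod halen hblen hinva hinvb
          hdesci hdescj
      · exact (key j i b a hbr hj hi hbval haval hbprod haprod hblen halen hinvb hinva
          hdescj hdesci).symm


lemma expI_eq (I : Finset ℕ) (p : ℕ) (hpI : p ∉ I) (x y : Fin n)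
    (hx : (x : ℕ) = p) (hy : (y : ℕ) = p + 1) : expI n I x = expI n I y := by
  unfold expI
  rw [hx, hy]
  congr 1
  ext m
  simp only [Finset.mem_filter, and_congr_right_iff]
  intro hm
  constructor
  · intro h
    rcases Nat.eq_or_lt_of_le h with h' | h'
    · exact absurd (h' ▸ hm) hpI
    · omega
  · omega

lemma rename_sw_xI (I : Finset ℕ) (p : ℕ) (hp : p + 1 < n) (hpI : p ∉ I) :
    rename (sw n p) (xI ℤ n I) = xI ℤ n I := by
  unfold xI
  rw [map_prod]
  have step : ∀ j : Fin n, rename (sw n p) ((X j : Pol n) ^ expI n I j)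
      = (X (sw n p j) : Pol n) ^ expI n I (sw n p j) := by
    intro j
    rw [map_pow, rename_X]
    congr 1
    have hv := sw_val p hp j
    by_cases h1 : (j : ℕ) = p
    · exact expI_eq I p hpI j (sw n p j) h1 (by rw [hv]; simp [h1])
    · by_cases h2 : (j : ℕ) = p + 1
      · exact (expI_eq I p hpI (sw n p j) j (by rw [hv]; simp [h1, h2]) h2).symm
      · have : sw n p j = j := sw_apply_ne p hp j h1 h2
        rw [this]
  calc ∏ j : Fin n, rename (sw n p) ((X j : Pol n) ^ expI n I j)
      = ∏ j : Fin n, (X (sw n p j) : Pol n) ^ expI n I (sw n p j) := by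
        exact Finset.prod_congr rfl fun j _ => step j
    _ = ∏ j : Fin n, (X j : Pol n) ^ expI n I j :=
        Equiv.prod_comp (sw n p) (fun j => (X j : Pol n) ^ expI n I j)

lemma fold_zero (hdem : Hyp n dem) (m : List ℕ) (hval : ∀ j ∈ m, j + 1 < n) :
    m.foldr (fun j f => dem j f - f) (0 : Pol n) = 0 := by
  induction m with
  | nil => rfl
  | cons y t ih =>
    rw [List.foldr_cons, ih (fun z hz => hval z (List.mem_cons_of_mem _ hz)),
      demZero hdem y (hval y List.mem_cons_self), sub_zero]

lemma pval_eq (w : Equiv.Perm (Fin n)) (m : ℕ) (hm : m < n) :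
    pval w m = (w ⟨m, hm⟩ : ℕ) := dif_pos hm

lemma permDes_swap_mul (w : Equiv.Perm (Fin n)) (i : ℕ) (hi : i + 1 < n)
    (hgap : ((w.symm ⟨i, Nat.lt_of_succ_lt hi⟩ : Fin n) : ℕ) + 1
      < ((w.symm ⟨i + 1, hi⟩ : Fin n) : ℕ)) :
    permDes (sw n i * w) = permDes w := by
  set p := ((w.symm ⟨i, Nat.lt_of_succ_lt hi⟩ : Fin n) : ℕ) with hp
  set q := ((w.symm ⟨i + 1, hi⟩ : Fin n) : ℕ) with hq0
  have hpn : p < n := (w.symm _).isLt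
  have hqn : q < n := (w.symm _).isLt
  have hvp : pval w p = i := by
    rw [pval_eq w p hpn]
    have h1 : (⟨p, hpn⟩ : Fin n) = w.symm ⟨i, Nat.lt_of_succ_lt hi⟩ := Fin.ext rfl
    rw [h1, Equiv.apply_symm_apply]
  have hvq : pval w q = i + 1 := by
    rw [pval_eq w q hqn]
    have h1 : (⟨q, hqn⟩ : Fin n) = w.symm ⟨i + 1, hi⟩ := Fin.ext rfl
    rw [h1, Equiv.apply_symm_apply]
  have hinj : ∀ m, ∀ hm : m < n, pval w m = i → m = p := by
    intro m hm h
    rw [pval_eq w m hm] at h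
    have h1 : w ⟨m, hm⟩ = ⟨i, Nat.lt_of_succ_lt hi⟩ := Fin.ext h
    have h2 := congrArg (fun z => ((w.symm z : Fin n) : ℕ)) h1
    simpa using h2
  have hinj2 : ∀ m, ∀ hm : m < n, pval w m = i + 1 → m = q := by
    intro m hm h
    rw [pval_eq w m hm] at h
    have h1 : w ⟨m, hm⟩ = ⟨i + 1, hi⟩ := Fin.ext h
    have h2 := congrArg (fun z => ((w.symm z : Fin n) : ℕ)) h1
    simpa using h2
  have base : ∀ m, ∀ hm : m < n, pval (sw n i * w) m
      = if pval w m = i then i + 1 else if pval w m = i + 1 then i else pval w m := by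
    intro m hm
    have h1 : pval (sw n i * w) m = ((sw n i) (w ⟨m, hm⟩) : ℕ) := by
      rw [pval_eq _ m hm]; rfl
    rw [h1, pval_eq w m hm, sw_val i hi]
  have key : ∀ r, r < n - 1 →
      (pval (sw n i * w) (r + 1) < pval (sw n i * w) r ↔ pval w (r + 1) < pval w r) := by
    intro r hr
    have hr1 : r < n := by omega
    have hr2 : r + 1 < n := by omega
    rw [base r hr1, base (r + 1) hr2]
    by_cases c1 : r = p
    · have e1 : pval w r = i := by rw [c1]; exact hvp
      have ne1 : pval w (r + 1) ≠ i := fun h => by have := hinj (r + 1) hr2 h; omega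
      have ne2 : pval w (r + 1) ≠ i + 1 := fun h => by have := hinj2 (r + 1) hr2 h; omega
      rw [if_neg ne1, if_neg ne2, e1, if_pos rfl]
      omega
    · by_cases c2 : r + 1 = p
      · have e1 : pval w (r + 1) = i := by rw [c2]; exact hvp
        have ne1 : pval w r ≠ i := fun h => by have := hinj r hr1 h; omega
        have ne2 : pval w r ≠ i + 1 := fun h => by have := hinj2 r hr1 h; omega
        rw [e1, if_pos rfl, if_neg ne1, if_neg ne2]
        omega
      · by_cases c3 : r = q
        · have e1 : pval w r = i + 1 := by rw [c3]; exact hvq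
          have ne1 : pval w (r + 1) ≠ i := fun h => by have := hinj (r + 1) hr2 h; omega
          have ne2 : pval w (r + 1) ≠ i + 1 := fun h => by have := hinj2 (r + 1) hr2 h; omega
          rw [if_neg ne1, if_neg ne2, e1, if_neg (show ¬(i + 1 = i) by omega), if_pos rfl]
          omega
        · by_cases c4 : r + 1 = q
          · have e1 : pval w (r + 1) = i + 1 := by rw [c4]; exact hvq
            have ne1 : pval w r ≠ i := fun h => by have := hinj r hr1 h; omega
            have ne2 : pval w r ≠ i + 1 := fun h => by have := hinj2 r hr1 h; omega
            rw [e1, if_neg (show ¬(i + 1 = i) by omega), if_pos rfl, if_neg ne1, if_neg ne2]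
            omega
          · have ne1 : pval w r ≠ i := fun h => by have := hinj r hr1 h; omega
            have ne2 : pval w r ≠ i + 1 := fun h => by have := hinj2 r hr1 h; omega
            have ne3 : pval w (r + 1) ≠ i := fun h => by have := hinj (r + 1) hr2 h; omega
            have ne4 : pval w (r + 1) ≠ i + 1 := fun h => by have := hinj2 (r + 1) hr2 h; omega
            rw [if_neg ne3, if_neg ne4, if_neg ne1, if_neg ne2]
  unfold permDes
  ext r
  simp only [Finset.mem_filter, Finset.mem_range]
  constructor
  · rintro ⟨hr, hlt⟩
    exact ⟨hr, (key r hr).mp hlt⟩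
  · rintro ⟨hr, hlt⟩
    exact ⟨hr, (key r hr).mpr hlt⟩

lemma swap_mul_eq_mul_swap (w : Equiv.Perm (Fin n)) (i : ℕ) (hi : i + 1 < n)
    (hq : ((w.symm ⟨i + 1, hi⟩ : Fin n) : ℕ)
      = ((w.symm ⟨i, Nat.lt_of_succ_lt hi⟩ : Fin n) : ℕ) + 1) :
    sw n i * w = w * sw n ((w.symm ⟨i, Nat.lt_of_succ_lt hi⟩ : Fin n) : ℕ) := by
  set pf := w.symm ⟨i, Nat.lt_of_succ_lt hi⟩ with hpf
  set qf := w.symm ⟨i + 1, hi⟩ with hqf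
  set P := ((pf : Fin n) : ℕ) with hP
  have hp1 : P + 1 < n := by have := qf.isLt; omega
  apply Equiv.ext
  intro x
  rw [Equiv.Perm.mul_apply, Equiv.Perm.mul_apply]
  by_cases hx : x = pf
  · subst hx
    rw [hpf, Equiv.apply_symm_apply, sw_apply_left i hi]
    have h1 : sw n P pf = ⟨P + 1, hp1⟩ := by
      have : pf = ⟨P, Nat.lt_of_succ_lt hp1⟩ := Fin.ext rfl
      rw [this]
      exact sw_apply_left P hp1
    rw [h1, show (⟨P + 1, hp1⟩ : Fin n) = qf from Fin.ext (show P + 1 = (qf : ℕ) by omega), hqf,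
      Equiv.apply_symm_apply]
  · by_cases hx2 : x = qf
    · subst hx2
      rw [hqf, Equiv.apply_symm_apply, sw_apply_right i hi]
      have h1 : sw n P qf = pf := by
        have h2 : qf = ⟨P + 1, hp1⟩ := Fin.ext (show (qf : ℕ) = P + 1 by omega)
        rw [h2, sw_apply_right P hp1]
      rw [h1, hpf, Equiv.apply_symm_apply]
    · have hv1 : ((w x : Fin n) : ℕ) ≠ i := by
        intro h
        apply hx
        have h1 : w x = ⟨i, Nat.lt_of_succ_lt hi⟩ := Fin.ext h
        rw [hpf, ← h1, Equiv.symm_apply_apply]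
      have hv2 : ((w x : Fin n) : ℕ) ≠ i + 1 := by
        intro h
        apply hx2
        have h1 : w x = ⟨i + 1, hi⟩ := Fin.ext h
        rw [hqf, ← h1, Equiv.symm_apply_apply]
      rw [sw_apply_ne i hi _ hv1 hv2]
      have hxp : (x : ℕ) ≠ P := fun h => hx (Fin.ext h)
      have hxq : (x : ℕ) ≠ P + 1 := fun h => hx2 (Fin.ext (show (x : ℕ) = (qf : ℕ) by omega))
      rw [sw_apply_ne P hp1 x hxp hxq]

end St7

/-- **The 0-Hecke module structure of the summands in Theorem 4.4.**  Let `D(w) = D(α)`,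
let `l` be a reduced word for `w`, put `A = π̄_w(x_{D(α)})` (computed via `l`), and let
`1 ≤ i ≤ n-1`.  Then: (1) if `ℓ(s_i w) < ℓ(w)` then `π̄_i A = -A`; (2) if `ℓ(s_i w) > ℓ(w)`
and `D(s_i w) = D(α)` then `π̄_i A = π̄_{s_i w}(x_{D(α)})` (computed via any reduced word
`l'` of `s_i w`); (3) if `ℓ(s_i w) > ℓ(w)` and `D(s_i w) ≠ D(α)` then `π̄_i A = 0`.
Here `π_i` is characterized by `(x_i - x_{i+1}) π_i f = x_i f - x_{i+1} s_i(f)` and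
`π̄_i = π_i - 1`. -/
theorem stmt_7 (n : ℕ) (hn : 1 ≤ n) (α : Composition n) (w : Equiv.Perm (Fin n))
    (hDw : permDes w = compDes α)
    (dem : ℕ → MvPolynomial (Fin n) ℤ → MvPolynomial (Fin n) ℤ)
    (hdem : ∀ (i : ℕ) (hi : i + 1 < n) (f : MvPolynomial (Fin n) ℤ),
      (X (⟨i, Nat.lt_of_succ_lt hi⟩ : Fin n) - X ⟨i + 1, hi⟩) * dem i f
        = X (⟨i, Nat.lt_of_succ_lt hi⟩ : Fin n) * f - X ⟨i + 1, hi⟩ * rename (sw n i) f)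
    (l : List ℕ) (hval : ∀ i ∈ l, i + 1 < n)
    (hprod : (l.map (sw n)).prod = w) (hred : l.length = invNum w)
    (i : ℕ) (hi : i + 1 < n)
    (A : MvPolynomial (Fin n) ℤ)
    (hA : A = l.foldr (fun j f => dem j f - f) (xI ℤ n (compDes α))) :
    (invNum (sw n i * w) < invNum w → dem i A - A = -A) ∧
    (invNum w < invNum (sw n i * w) → permDes (sw n i * w) = compDes α →
      ∀ l' : List ℕ, (∀ j ∈ l', j + 1 < n) → (l'.map (sw n)).prod = sw n i * w →
        l'.length = invNum (sw n i * w) →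
        dem i A - A = l'.foldr (fun j f => dem j f - f) (xI ℤ n (compDes α))) ∧
    (invNum w < invNum (sw n i * w) → permDes (sw n i * w) ≠ compDes α →
      dem i A - A = 0) := by
  have hdem' : St7.Hyp n dem := hdem
  set x : MvPolynomial (Fin n) ℤ := xI ℤ n (compDes α) with hx
  refine ⟨?_, ?_, ?_⟩
  · -- (1) shortening case
    intro hshort
    have hdich := St7.descent_of_short w i hi hshort
    obtain ⟨m, hmval, hmprod, hmlen⟩ :=
      St7.exists_reduced (invNum (sw n i * w)) (sw n i * w) rfl
    have hprod_im : ((i::m).map (sw n)).prod = w := by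
      rw [List.map_cons, List.prod_cons, hmprod, ← mul_assoc, St7.sw_mul_self, one_mul]
    have hval_im : ∀ y ∈ i::m, y + 1 < n := by
      intro y hy
      rcases List.mem_cons.mp hy with rfl | hy'
      · exact hi
      · exact hmval y hy'
    have hlen_im : (i::m).length = invNum w := by
      rw [List.length_cons, hmlen]; omega
    have e := St7.word_indep hdem' (invNum w) w l (i::m) hval hval_im hprod hprod_im
      hred hlen_im rfl x
    rw [hA, e]
    simp only [List.foldr_cons]
    exact St7.T_quad hdem' i hi _
  · -- (2) lengthening, same descents
    intro hlong _ l' hl'val hl'prod hl'len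
    have hdich := St7.ascent_of_long w i hi hlong
    have hprod_il : ((i::l).map (sw n)).prod = sw n i * w := by
      rw [List.map_cons, List.prod_cons, hprod]
    have hval_il : ∀ y ∈ i::l, y + 1 < n := by
      intro y hy
      rcases List.mem_cons.mp hy with rfl | hy'
      · exact hi
      · exact hval y hy'
    have hlen_il : (i::l).length = invNum (sw n i * w) := by
      rw [List.length_cons, hred]; omega
    have e := St7.word_indep hdem' (invNum (sw n i * w)) (sw n i * w) (i::l) l'
      hval_il hl'val hprod_il hl'prod hlen_il hl'len rfl x
    simp only [List.foldr_cons] at e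
    rw [hA]
    exact e
  · -- (3) lengthening, different descents
    intro hlong hDes
    have hdich := St7.ascent_of_long w i hi hlong
    have hlt : ((w.symm ⟨i, Nat.lt_of_succ_lt hi⟩ : Fin n) : ℕ)
        < ((w.symm ⟨i + 1, hi⟩ : Fin n) : ℕ) := hdich.2
    have hq : ((w.symm ⟨i + 1, hi⟩ : Fin n) : ℕ)
        = ((w.symm ⟨i, Nat.lt_of_succ_lt hi⟩ : Fin n) : ℕ) + 1 := by
      by_contra hne
      have hgap : ((w.symm ⟨i, Nat.lt_of_succ_lt hi⟩ : Fin n) : ℕ) + 1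
          < ((w.symm ⟨i + 1, hi⟩ : Fin n) : ℕ) := by omega
      exact hDes (by rw [St7.permDes_swap_mul w i hi hgap, hDw])
    have hswap := St7.swap_mul_eq_mul_swap w i hi hq
    set P : ℕ := ((w.symm ⟨i, Nat.lt_of_succ_lt hi⟩ : Fin n) : ℕ) with hP
    have hp1 : P + 1 < n := by
      have := (w.symm ⟨i + 1, hi⟩).isLt; omega
    have hPn : P < n := Nat.lt_of_succ_lt hp1
    have hval_wp : pval w P = i := by
      rw [St7.pval_eq w P hPn]
      have h1 : (⟨P, hPn⟩ : Fin n) = w.symm ⟨i, Nat.lt_of_succ_lt hi⟩ := Fin.ext rfl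
      rw [h1, Equiv.apply_symm_apply]
    have hval_wp1 : pval w (P + 1) = i + 1 := by
      rw [St7.pval_eq w (P + 1) hp1]
      have h1 : (⟨P + 1, hp1⟩ : Fin n) = w.symm ⟨i + 1, hi⟩ :=
        Fin.ext (show P + 1 = ((w.symm ⟨i + 1, hi⟩ : Fin n) : ℕ) by omega)
      rw [h1, Equiv.apply_symm_apply]
    have hPdes : P ∉ permDes w := by
      intro hmem
      rw [permDes, Finset.mem_filter] at hmem
      obtain ⟨-, hlt2⟩ := hmem
      rw [hval_wp, hval_wp1] at hlt2
      omega
    have hPI : P ∉ compDes α := by rw [← hDw]; exact hPdes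
    have hsymm : rename (sw n P) x = x := St7.rename_sw_xI (compDes α) P hp1 hPI
    have hdx : dem P x - x = 0 := by
      rw [St7.dem_of_symm hdem' P hp1 x hsymm, sub_self]
    have hprod_il : ((i::l).map (sw n)).prod = sw n i * w := by
      rw [List.map_cons, List.prod_cons, hprod]
    have hval_il : ∀ y ∈ i::l, y + 1 < n := by
      intro y hy
      rcases List.mem_cons.mp hy with rfl | hy'
      · exact hi
      · exact hval y hy'
    have hlen_il : (i::l).length = invNum (sw n i * w) := by
      rw [List.length_cons, hred]; omega
    have hprod_lp : ((l ++ [P]).map (sw n)).prod = sw n i * w := by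
      rw [List.map_append, List.prod_append, hprod, hswap]
      simp
    have hval_lp : ∀ y ∈ l ++ [P], y + 1 < n := by
      intro y hy
      rcases List.mem_append.mp hy with hy' | hy'
      · exact hval y hy'
      · simp at hy'; omega
    have hlen_lp : (l ++ [P]).length = invNum (sw n i * w) := by
      rw [List.length_append, hred]
      simp
      omega
    have e := St7.word_indep hdem' (invNum (sw n i * w)) (sw n i * w) (i::l) (l ++ [P])
      hval_il hval_lp hprod_il hprod_lp hlen_il hlen_lp rfl x
    have e2 : (l ++ [P]).foldr (fun j f => dem j f - f) x = 0 := by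
      rw [List.foldr_append]
      have h0 : ([P].foldr (fun j f => dem j f - f) x) = 0 := by
        simpa using hdx
      rw [h0]
      exact St7.fold_zero hdem' l hval
    simp only [List.foldr_cons] at e
    rw [hA]
    exact e.trans e2
end

section
/- Let (W, S) be a finite Coxeter system with S = {s_1,…,s_r} and Coxeter matrix (m_{ij}), let F be a field, and let V be a finite-dimensional graded F-vector space equipped with degree-preserving linear endomorphisms T_1,…,T_r satisfying T_i² = −T_i for all i and the braid relations (T_iT_jT_i⋯) = (T_jT_iT_j⋯) (alternating products with m_{ij} factors on each side) for all i ≠ j. For J ⊆ {1,…,r} set V_J = ∩_{j ∉ J} ker T_j. Suppose 0 = V_0 ⊂ V_1 ⊂ ⋯ ⊂ V_N = V is a chain of graded subspaces, each invariant under all T_i, with each quotient V_j/V_{j−1} one-dimensional, concentrated in degree d_j, and with T_i acting on V_j/V_{j−1} as −1 if i ∈ S_j and as 0 if i ∉ S_j, for some S_j ⊆ {1,…,r}. Then for every I ⊆ {1,…,r}: ∑_{j : S_j = I} t^{d_j} = ∑_{J ⊆ I} (−1)^{|I|−|J|}·Hilb(V_J, t) as polynomials in t. (Lemma 6.1.)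 -/
/-- The alternating word `[i, j, i, j, …]` of length `m`. -/
def altWord {ι : Type*} (i j : ι) : ℕ → List ι
  | 0 => []
  | m + 1 => i :: altWord j i m

set_option maxHeartbeats 1000000 in
section

open Real

namespace Lemma61

variable {B : Type*}

noncomputable def cM (M : CoxeterMatrix B) (k l : B) : ℝ :=
  if M k l = 0 then -1 else -Real.cos (Real.pi / (M k l : ℝ))

lemma cM_diag (M : CoxeterMatrix B) (k : B) : cM M k k = 1 := by
  simp [cM, M.diagonal k]

lemma cM_symm (M : CoxeterMatrix B) (k l : B) : cM M k l = cM M l k := by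
  simp [cM, M.symmetric k l]

lemma cM_eq (M : CoxeterMatrix B) {k l : B} (h : M k l ≠ 0) :
    cM M k l = -Real.cos (Real.pi / (M k l : ℝ)) := by simp [cM, h]

lemma cM_zero (M : CoxeterMatrix B) {k l : B} (h : M k l = 0) : cM M k l = -1 := by
  simp [cM, h]

/-- the linear functional `x ↦ ∑ x l * cM k l`. -/
noncomputable def phi (M : CoxeterMatrix B) (k : B) : (B →₀ ℝ) →ₗ[ℝ] ℝ :=
  Finsupp.linearCombination ℝ (fun l => cM M k l)

lemma phi_single (M : CoxeterMatrix B) (k l : B) (t : ℝ) :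
    phi M k (Finsupp.single l t) = t * cM M k l := by
  simp [phi, Finsupp.linearCombination_single, smul_eq_mul]

noncomputable def sigma (M : CoxeterMatrix B) (k : B) : Module.End ℝ (B →₀ ℝ) :=
  LinearMap.id - (phi M k).smulRight (Finsupp.single k 2)

lemma sigma_apply (M : CoxeterMatrix B) (k : B) (x : B →₀ ℝ) :
    sigma M k x = x - phi M k x • Finsupp.single k 2 := rfl

lemma sigma_sq (M : CoxeterMatrix B) (k : B) : sigma M k * sigma M k = 1 := by
  apply LinearMap.ext
  intro x
  simp only [Module.End.mul_apply, sigma_apply, Module.End.one_apply]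
  rw [map_sub, map_smul, phi_single, cM_diag]
  simp only [smul_eq_mul, mul_one]
  module

end Lemma61

namespace Lemma61

/-! ### rank two matrix computation -/

noncomputable def Rot (c : ℝ) : Matrix (Fin 2) (Fin 2) ℝ := !![4*c^2-1, -2*c; 2*c, -1]

lemma Rot_sq (c : ℝ) : Rot c * Rot c = (4*c^2-2) • Rot c - 1 := by
  ext i j
  fin_cases i <;> fin_cases j <;>
    simp [Rot, Matrix.mul_apply, Fin.sum_univ_two, Matrix.one_apply] <;> ring

lemma Rot_pow_eq_one (m : ℕ) (hm : 2 ≤ m) :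
    (Rot (Real.cos (Real.pi / m)))^m = 1 := by
  rcases eq_or_lt_of_le hm with h2 | h3
  · -- m = 2
    rw [← h2]
    have : Real.pi / ((2:ℕ):ℝ) = Real.pi / 2 := by norm_num
    rw [this, Real.cos_pi_div_two, pow_two]
    ext i j
    fin_cases i <;> fin_cases j <;>
      simp [Rot, Matrix.mul_apply, Fin.sum_univ_two, Matrix.one_apply] <;> norm_num
  · have hm3 : 3 ≤ m := h3
    have hmR : (0:ℝ) < m := by positivity
    set θ := Real.pi / m with hθ
    have hθpos : 0 < θ := by positivity
    have hθm : θ * m = Real.pi := div_mul_cancel₀ _ (ne_of_gt hmR)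
    have h3R : (3:ℝ) ≤ m := by exact_mod_cast hm3
    have hθlt : 2*θ < Real.pi := by nlinarith
    have hsin : Real.sin (2*θ) ≠ 0 := by
      have := Real.sin_pos_of_pos_of_lt_pi (by positivity : (0:ℝ) < 2*θ) hθlt
      linarith
    have hcos2 : 4 * (Real.cos θ)^2 - 2 = 2 * Real.cos (2*θ) := by
      have := Real.cos_two_mul θ
      nlinarith [this]
    set c := Real.cos θ with hc
    set p : ℕ → ℝ := fun t => Real.sin (2*t*θ) / Real.sin (2*θ) with hp
    have p0 : p 0 = 0 := by simp [hp]
    have p1 : p 1 = 1 := by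
      simp only [hp, Nat.cast_one, mul_one]
      rw [div_eq_one_iff_eq hsin]
    have prec : ∀ t : ℕ, p (t+2) = (4*c^2-2) * p (t+1) - p t := by
      intro t
      have h1 : (2*(((t:ℕ)+2:ℕ):ℝ)*θ) = 2*(((t:ℕ)+1:ℕ):ℝ)*θ + 2*θ := by push_cast; ring
      have h2 : (2*(t:ℝ)*θ) = 2*(((t:ℕ)+1:ℕ):ℝ)*θ - 2*θ := by push_cast; ring
      simp only [hp]
      rw [h1, Real.sin_add, h2, Real.sin_sub, hcos2]
      field_simp
      ring
    have pind : ∀ t : ℕ, (Rot c)^(t+1) = p (t+1) • Rot c - p t • (1 : Matrix (Fin 2) (Fin 2) ℝ) := by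
      intro t
      induction t with
      | zero => simp only [zero_add, pow_one, p0, p1, one_smul, zero_smul, sub_zero]
      | succ t ih =>
          have hps : (Rot c)^(t+1+1) = (Rot c)^(t+1) * Rot c := by rw [pow_succ]
          rw [hps, ih, sub_mul, Matrix.smul_mul, Matrix.smul_mul, Rot_sq, one_mul,
            prec t]
          module
    have pm : p m = 0 := by
      have : 2*(m:ℝ)*θ = 2*Real.pi := by rw [mul_assoc, mul_comm (m:ℝ) θ, hθm]
      simp only [hp, this, Real.sin_two_pi, zero_div]
    have pm1 : p (m-1) = -1 := by
      have hcast : ((m-1:ℕ):ℝ) = (m:ℝ) - 1 := by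
        have : 1 ≤ m := by omega
        push_cast [this]
        ring
      have harg : 2*((m:ℝ)-1)*θ = 2*Real.pi - 2*θ := by nlinarith [hθm]
      simp only [hp, hcast, harg]
      rw [Real.sin_sub, Real.sin_two_pi, Real.cos_two_pi]
      field_simp
      ring
    obtain ⟨t, rfl⟩ : ∃ t, m = t + 1 := ⟨m - 1, by omega⟩
    have pm1' : p t = -1 := by simpa using pm1
    rw [pind t, pm, pm1']
    module

/-- sum of the first `m` powers vanishes -/
lemma Rot_geom_sum (m : ℕ) (hm : 2 ≤ m) :
    ∑ t ∈ Finset.range m, (Rot (Real.cos (Real.pi / m)))^t = 0 := by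
  have hmR : (0:ℝ) < m := by positivity
  set c := Real.cos (Real.pi / m) with hc
  have hclt : c < 1 := by
    rw [hc]
    calc Real.cos (Real.pi / m) < Real.cos 0 := by
          apply Real.cos_lt_cos_of_nonneg_of_le_pi le_rfl
          · apply div_le_self Real.pi_pos.le
            exact_mod_cast by omega
          · positivity
      _ = 1 := Real.cos_zero
  have hcge : 0 ≤ c := by
    rw [hc]
    apply Real.cos_nonneg_of_mem_Icc
    constructor
    · have h0 : (0:ℝ) ≤ Real.pi / m := by positivity
      nlinarith [Real.pi_pos]
    · rw [div_le_div_iff₀ hmR (by norm_num : (0:ℝ) < 2)]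
      exact mul_le_mul_of_nonneg_left (by exact_mod_cast hm) Real.pi_pos.le
  have hdet : (Rot c - 1).det ≠ 0 := by
    have : (Rot c - 1).det = 4 - 4*c^2 := by
      simp [Rot, Matrix.det_fin_two, Matrix.one_apply]
      ring
    rw [this]
    nlinarith
  have hunit : IsUnit (Rot c - 1) := by
    rw [Matrix.isUnit_iff_isUnit_det]
    exact isUnit_iff_ne_zero.mpr hdet
  have h := geom_sum_mul (Rot c) m
  rw [Rot_pow_eq_one m hm, sub_self] at h
  have h0 : (0 : Matrix (Fin 2) (Fin 2) ℝ) * (Rot c - 1) = 0 := by rw [zero_mul]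
  rw [← h0] at h
  exact hunit.mul_right_cancel h

end Lemma61

namespace Lemma61

variable {B : Type*}

lemma sigma_pair (M : CoxeterMatrix B) (k l : B) (hkl : k ≠ l) (hm : 2 ≤ M k l) :
    (sigma M k * sigma M l) ^ (M k l) = 1 := by
  set m := M k l with hmdef
  set c := Real.cos (Real.pi / m) with hc
  have hckl : cM M k l = -c := cM_eq M (by omega)
  have hclk : cM M l k = -c := by rw [cM_symm]; exact hckl
  set ek : B →₀ ℝ := Finsupp.single k 1 with hek
  set el : B →₀ ℝ := Finsupp.single l 1 with hel
  set g := sigma M k * sigma M l with hg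
  set a : (B →₀ ℝ) → ℝ := fun x => -2 * phi M k x - 4*c* phi M l x with ha
  set b : (B →₀ ℝ) → ℝ := fun x => -2 * phi M l x with hb
  have hsingle2 : ∀ k' : B, (Finsupp.single k' 2 : B →₀ ℝ) = (2:ℝ) • Finsupp.single k' 1 := by
    intro k'; rw [Finsupp.smul_single]; norm_num
  have g_apply : ∀ x, g x = x + a x • ek + b x • el := by
    intro x
    rw [hg, Module.End.mul_apply, sigma_apply, sigma_apply, map_sub, map_smul, phi_single, hckl]
    simp only [ha, hb, hsingle2, smul_eq_mul, hek, hel]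
    module
  have phikek : phi M k ek = 1 := by rw [hek, phi_single, cM_diag]; ring
  have philek : phi M l ek = -c := by rw [hek, phi_single, hclk]; ring
  have phikel : phi M k el = -c := by rw [hel, phi_single, hckl]; ring
  have philel : phi M l el = 1 := by rw [hel, phi_single, cM_diag]; ring
  have aek : a ek = 4*c^2-2 := by rw [ha]; simp only [phikek, philek]; ring
  have bek : b ek = 2*c := by rw [hb]; simp only [philek]; ring
  have ael : a el = -2*c := by rw [ha]; simp only [phikel, philel]; ring
  have bel : b el = -2 := by rw [hb]; simp only [philel]; ring
  have a_lin : ∀ x p q, a (x + p • ek + q • el) = a x + p * a ek + q * a el := by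
    intro x p q; simp only [ha, map_add, map_smul, smul_eq_mul]; ring
  have b_lin : ∀ x p q, b (x + p • ek + q • el) = b x + p * b ek + q * b el := by
    intro x p q; simp only [hb, map_add, map_smul, smul_eq_mul]; ring
  set RM := Rot c with hRM
  set SM : ℕ → Matrix (Fin 2) (Fin 2) ℝ := fun t => ∑ r ∈ Finset.range t, RM^r with hSM
  have Ssucc : ∀ t, SM (t+1) = RM * SM t + 1 := by
    intro t
    show ∑ r ∈ Finset.range (t+1), RM^r = RM * ∑ r ∈ Finset.range t, RM^r + 1
    exact geom_sum_succ
  have R00 : RM 0 0 = 4*c^2-1 := by rw [hRM]; simp [Rot]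
  have R01 : RM 0 1 = -2*c := by rw [hRM]; simp [Rot]
  have R10 : RM 1 0 = 2*c := by rw [hRM]; simp [Rot]
  have R11 : RM 1 1 = -1 := by rw [hRM]; simp [Rot]
  have Sentry : ∀ (t : ℕ) (i j : Fin 2), SM (t+1) i j
      = RM i 0 * SM t 0 j + RM i 1 * SM t 1 j + (1 : Matrix (Fin 2) (Fin 2) ℝ) i j := by
    intro t i j
    rw [Ssucc t]
    simp [Matrix.add_apply, Matrix.mul_apply, Fin.sum_univ_two]
  have main : ∀ t x, (g^t) x = x + (SM t 0 0 * a x + SM t 0 1 * b x) • ek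
      + (SM t 1 0 * a x + SM t 1 1 * b x) • el := by
    intro t
    induction t with
    | zero => intro x; simp [hSM]
    | succ t ih =>
        intro x
        have hstep : (g^(t+1)) x = g ((g^t) x) := by rw [pow_succ']; rfl
        rw [hstep, ih x, g_apply, a_lin, b_lin]
        rw [Sentry t 0 0, Sentry t 0 1, Sentry t 1 0, Sentry t 1 1,
          R00, R01, R10, R11]
        simp only [Matrix.one_apply_eq, Matrix.one_apply_ne (by decide : (0:Fin 2) ≠ 1),
          Matrix.one_apply_ne (by decide : (1:Fin 2) ≠ 0), aek, bek, ael, bel]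
        module
  have hSm0 : SM m = 0 := by
    rw [hSM, hRM, hc]
    exact Rot_geom_sum m hm
  apply LinearMap.ext
  intro x
  rw [main m x, hSm0]
  simp

lemma sigma_liftable (M : CoxeterMatrix B) : CoxeterMatrix.IsLiftable M (fun k => sigma M k) := by
  intro k l
  rcases eq_or_ne k l with rfl | hkl
  · rw [M.diagonal, pow_one, sigma_sq]
  · rcases Nat.eq_zero_or_pos (M k l) with h0 | hpos
    · rw [h0, pow_zero]
    · have h2 : 2 ≤ M k l := by
        have := M.off_diagonal k l hkl; omega
      exact sigma_pair M k l hkl h2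

theorem M_entry_ne_zero {W : Type*} [Group W] [Finite W] {M : CoxeterMatrix B}
    (cs : CoxeterSystem M W) {i j : B} (hij : i ≠ j) : M i j ≠ 0 := by
  intro h0
  have hcij : cM M i j = -1 := cM_zero M h0
  have hcji : cM M j i = -1 := by rw [cM_symm]; exact hcij
  set φ : W →* Module.End ℝ (B →₀ ℝ) := cs.lift ⟨fun k => sigma M k, sigma_liftable M⟩ with hφ
  set ei : B →₀ ℝ := Finsupp.single i 1 with hei
  set ej : B →₀ ℝ := Finsupp.single j 1 with hej
  set u : B →₀ ℝ := ei + ej with hu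
  set g := sigma M i * sigma M j with hg
  have hsingle2 : ∀ k' : B, (Finsupp.single k' 2 : B →₀ ℝ) = (2:ℝ) • Finsupp.single k' 1 := by
    intro k'; rw [Finsupp.smul_single]; norm_num
  have phiiu : phi M i u = 0 := by
    rw [hu, hei, hej, map_add, phi_single, phi_single, cM_diag, hcij]; ring
  have phiju : phi M j u = 0 := by
    rw [hu, hei, hej, map_add, phi_single, phi_single, cM_diag, hcji]; ring
  have hsju : sigma M j u = u := by rw [sigma_apply, phiju, zero_smul, sub_zero]
  have hsiu : sigma M i u = u := by rw [sigma_apply, phiiu, zero_smul, sub_zero]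
  have hgu : g u = u := by rw [hg, Module.End.mul_apply, hsju, hsiu]
  have hsj : sigma M j ej = -ej := by
    rw [sigma_apply]
    nth_rewrite 2 [hej]
    rw [phi_single, cM_diag, hsingle2, hej]
    module
  have hsi : sigma M i ej = ej + (2:ℝ) • ei := by
    rw [sigma_apply]
    nth_rewrite 2 [hej]
    rw [phi_single, hcij, hsingle2, hei]
    module
  have hgej : g ej = ej - (2:ℝ) • u := by
    rw [hg, Module.End.mul_apply, hsj, map_neg, hsi, hu]
    module
  have hpow : ∀ n : ℕ, (g^n) ej = ej - ((2*n : ℝ)) • u := by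
    intro n
    induction n with
    | zero => simp
    | succ n ih =>
        have hstep : (g^(n+1)) ej = g ((g^n) ej) := by rw [pow_succ']; rfl
        rw [hstep, ih, map_sub, map_smul, hgej, hgu]
        push_cast
        module
  set n := orderOf (cs.simple i * cs.simple j) with hn
  have hnpos : 0 < n := orderOf_pos _
  have h1 : (cs.simple i * cs.simple j)^n = 1 := pow_orderOf_eq_one _
  have h2 : (g : Module.End ℝ (B →₀ ℝ))^n = 1 := by
    have := congrArg φ h1
    rw [map_pow, map_mul, map_one] at this
    rw [hφ, cs.lift_apply_simple, cs.lift_apply_simple] at this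
    exact this
  have h3 := hpow n
  rw [h2] at h3
  have h4 : ((2*n : ℝ)) • u = 0 := by
    rw [Module.End.one_apply] at h3
    linear_combination (norm := module) h3
  have h5 := congrArg (fun z : B →₀ ℝ => z i) h4
  simp only [Finsupp.smul_apply, Finsupp.coe_zero, Pi.zero_apply, hu, hei, hej,
    Finsupp.add_apply, Finsupp.single_eq_same, Finsupp.single_eq_of_ne' hij.symm,
    smul_eq_mul] at h5
  have : (n:ℝ) = 0 := by linarith
  exact_mod_cast absurd this (by positivity)

end Lemma61

namespace Lemma61

lemma altWord_length {ι : Type*} (i j : ι) : ∀ m, (altWord i j m).length = m := by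
  intro m
  induction m generalizing i j with
  | zero => rfl
  | succ m ih => simp [altWord, ih]

lemma altWord_ne_nil {ι : Type*} (i j : ι) {m : ℕ} (hm : 1 ≤ m) : altWord i j m ≠ [] := by
  cases m with
  | zero => omega
  | succ m => simp [altWord]

lemma altWord_mem {ι : Type*} (i j : ι) : ∀ m, ∀ x ∈ altWord i j m, x = i ∨ x = j := by
  intro m
  induction m generalizing i j with
  | zero => simp [altWord]
  | succ m ih =>
      intro x hx
      rcases List.mem_cons.mp hx with h | h
      · exact Or.inl h
      · exact (ih j i x h).symm

lemma altWord_getLast {ι : Type*} :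
    ∀ (m : ℕ) (i j : ι) (h : altWord i j m ≠ []),
      (altWord i j m).getLast h = if m % 2 = 1 then i else j := by
  intro m
  induction m with
  | zero => intro i j h; simp [altWord] at h
  | succ m ih =>
      intro i j h
      cases m with
      | zero => simp [altWord]
      | succ m' =>
          have hne : altWord j i (m'+1) ≠ [] := by simp [altWord]
          have : (altWord i j (m'+2)).getLast h = (altWord j i (m'+1)).getLast hne := by
            show (i :: altWord j i (m'+1)).getLast h = _
            exact List.getLast_cons hne
          rw [this, ih j i hne]
          rcases Nat.mod_two_eq_zero_or_one m' with h0 | h1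
          · have a1 : (m' + 1) % 2 = 1 := by omega
            have a2 : (m' + 1 + 1) % 2 = 0 := by omega
            rw [a1, a2]; simp
          · have a1 : (m' + 1) % 2 = 0 := by omega
            have a2 : (m' + 1 + 1) % 2 = 1 := by omega
            rw [a1, a2]; simp

variable {F V : Type*} [Field F] [AddCommGroup V] [Module F V]

/-- Action of a word on `w` modulo `Qn1`. -/
lemma list_action {r : ℕ} (T : Fin r → Module.End F V) (Qn1 : Submodule F V)
    (hstab : ∀ i, Qn1.map (T i) ≤ Qn1) (vn : V)
    (SS : Finset (Fin r)) (hSn : ∀ i ∈ SS, T i vn + vn ∈ Qn1)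
    (w : V) (c : Fin r → F) (hw : ∀ i ∈ SS, T i w - c i • vn ∈ Qn1) :
    ∀ (L : List (Fin r)) (hL : L ≠ []) (_ : ∀ x ∈ L, x ∈ SS),
      ((L.map T).prod) w - ((-1:F)^(L.length-1) * c (L.getLast hL)) • vn ∈ Qn1 := by
  intro L
  induction L with
  | nil => intro h; exact absurd rfl h
  | cons x L' ih =>
      intro hL hmem
      have hx : x ∈ SS := hmem x List.mem_cons_self
      rcases eq_or_ne L' [] with rfl | hL'
      · simpa using hw x hx
      · have hmem' : ∀ z ∈ L', z ∈ SS := fun z hz => hmem z (List.mem_cons_of_mem _ hz)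
        have ihh := ih hL' hmem'
        set s : F := (-1:F)^(L'.length - 1) * c (L'.getLast hL') with hs
        have hprod : (((x :: L').map T).prod) w = T x (((L'.map T).prod) w) := by
          rw [List.map_cons, List.prod_cons, Module.End.mul_apply]
        have hlast : (x::L').getLast hL = L'.getLast hL' := List.getLast_cons hL'
        have hlen : (x::L').length - 1 = L'.length := by simp
        rw [hprod, hlast, hlen]
        have hlen1 : L'.length = (L'.length - 1) + 1 := by
          have : L'.length ≠ 0 := fun h => hL' (List.length_eq_zero_iff.mp h)
          omega
        have hpow : ((-1:F))^(L'.length) = -(((-1:F))^(L'.length - 1)) := by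
          conv_lhs => rw [hlen1]
          rw [pow_succ]; ring
        have h1 : T x ((L'.map T).prod w - s • vn) ∈ Qn1 := hstab x ⟨_, ihh, rfl⟩
        have h2 : s • (T x vn + vn) ∈ Qn1 := Submodule.smul_mem _ _ (hSn x hx)
        have key : T x (((L'.map T).prod) w) - ((-1:F)^(L'.length) * c (L'.getLast hL')) • vn
            = T x (((L'.map T).prod) w - s • vn) + s • (T x vn + vn) := by
          rw [map_sub, map_smul, hpow, hs]
          module
        rw [key]
        exact Submodule.add_mem _ h1 h2

end Lemma61

namespace Lemma61

lemma signsum {α : Type*} [DecidableEq α] (s : Finset α) :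
    ∑ B ∈ s.powerset, (-1:ℤ)^(s.card - B.card) = if s = ∅ then 1 else 0 := by
  have h : ∀ B ∈ s.powerset, (-1:ℤ)^(s.card - B.card) = (-1:ℤ)^s.card * (-1:ℤ)^B.card := by
    intro B hB
    have hle : B.card ≤ s.card := Finset.card_le_card (Finset.mem_powerset.mp hB)
    have : s.card - B.card + B.card = s.card := Nat.sub_add_cancel hle
    calc (-1:ℤ)^(s.card - B.card)
        = (-1:ℤ)^(s.card - B.card) * ((-1:ℤ)^B.card * (-1:ℤ)^B.card) := by
          rw [← pow_add]
          simp [← two_mul]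
      _ = (-1:ℤ)^(s.card - B.card + B.card) * (-1:ℤ)^B.card := by rw [pow_add]; ring
      _ = (-1:ℤ)^s.card * (-1:ℤ)^B.card := by rw [this]
  rw [Finset.sum_congr rfl h, ← Finset.mul_sum, Finset.sum_powerset_neg_one_pow_card]
  by_cases hs : s = ∅
  · simp [hs]
  · simp [hs]

lemma mobius {α : Type*} [DecidableEq α] (I A : Finset α) :
    (∑ J ∈ I.powerset, (-1:ℤ)^(I.card - J.card) * (if A ⊆ J then 1 else 0))
      = if A = I then 1 else 0 := by
  by_cases hAI : A ⊆ I
  · have hbij : ∑ J ∈ I.powerset, (-1:ℤ)^(I.card - J.card) * (if A ⊆ J then 1 else 0)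
        = ∑ B ∈ (I \ A).powerset, (-1:ℤ)^((I \ A).card - B.card) := by
      simp only [mul_ite, mul_one, mul_zero]
      rw [← Finset.sum_filter]
      apply Finset.sum_nbij' (i := fun J => J \ A) (j := fun B => A ∪ B)
      · intro J hJ
        simp only [Finset.mem_filter, Finset.mem_powerset] at hJ
        exact Finset.mem_powerset.mpr (Finset.sdiff_subset_sdiff hJ.1 le_rfl)
      · intro B hB
        simp only [Finset.mem_powerset] at hB
        simp only [Finset.mem_filter, Finset.mem_powerset]
        constructor
        · exact Finset.union_subset hAI (hB.trans (Finset.sdiff_subset))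
        · exact Finset.subset_union_left
      · intro J hJ
        simp only [Finset.mem_filter, Finset.mem_powerset] at hJ
        rw [Finset.union_sdiff_of_subset hJ.2]
      · intro B hB
        simp only [Finset.mem_powerset] at hB
        have : Disjoint A B := by
          have := hB.trans (Finset.sdiff_subset (s := I) (t := A))
          exact Finset.disjoint_left.mpr fun a ha hb => by
            have := Finset.mem_sdiff.mp (hB hb)
            exact this.2 ha
        rw [Finset.union_sdiff_cancel_left this]
      · intro J hJ
        simp only [Finset.mem_filter, Finset.mem_powerset] at hJ
        have hcard : (J \ A).card = J.card - A.card := Finset.card_sdiff_of_subset hJ.2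
        have hIA : (I \ A).card = I.card - A.card := Finset.card_sdiff_of_subset hAI
        have h1 : A.card ≤ J.card := Finset.card_le_card hJ.2
        have h2 : J.card ≤ I.card := Finset.card_le_card hJ.1
        rw [hcard, hIA]
        congr 1
        omega
    rw [hbij, signsum]
    have : I \ A = ∅ ↔ A = I := by
      rw [Finset.sdiff_eq_empty_iff_subset]
      constructor
      · intro h; exact Finset.Subset.antisymm hAI h
      · intro h; rw [h]
    by_cases h : A = I
    · simp [h, this]
    · rw [if_neg (fun hh => h (this.mp hh)), if_neg h]
  · have : ∀ J ∈ I.powerset, (-1:ℤ)^(I.card - J.card) * (if A ⊆ J then 1 else 0) = 0 := by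
      intro J hJ
      rw [if_neg, mul_zero]
      intro hAJ
      exact hAI (hAJ.trans (Finset.mem_powerset.mp hJ))
    rw [Finset.sum_congr rfl this, Finset.sum_const_zero, if_neg]
    intro h; rw [h] at hAI; exact hAI le_rfl
end Lemma61

namespace Lemma61

variable {F V : Type*} [Field F] [AddCommGroup V] [Module F V] [FiniteDimensional F V]



theorem key_count {r : ℕ}
    (deg : ℕ → Submodule F V) (hdeg : iSupIndep deg) (hdegtop : (⨆ d, deg d) = ⊤)
    (T : Fin r → Module.End F V)
    (hT : ∀ (i : Fin r) (d : ℕ), (deg d).map (T i) ≤ deg d)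
    (hsq : ∀ i : Fin r, T i * T i = -T i)
    (hbraid1 : ∀ i i' : Fin r, i ≠ i' → ∃ m, 1 ≤ m ∧
      ((altWord i i' m).map T).prod = ((altWord i' i m).map T).prod)
    (N : ℕ) (Q : ℕ → Submodule F V) (S : ℕ → Finset (Fin r)) (dv : ℕ → ℕ) (v : ℕ → V)
    (hQ0 : Q 0 = ⊥) (hQN : Q N = ⊤)
    (hchain : ∀ j ∈ Finset.Icc 1 N, Q (j - 1) ≤ Q j)
    (hhom : ∀ j ∈ Finset.Icc 1 N, v j ∈ deg (dv j))
    (hgen : ∀ j ∈ Finset.Icc 1 N,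
      v j ∈ Q j ∧ v j ∉ Q (j - 1) ∧ Q j = Q (j - 1) ⊔ Submodule.span F {v j})
    (hstable : ∀ (j : ℕ) (i : Fin r), (Q j).map (T i) ≤ Q j)
    (hact : ∀ j ∈ Finset.Icc 1 N, ∀ i : Fin r,
      T i (v j) - (if i ∈ S j then (-1 : F) else 0) • v j ∈ Q (j - 1))
    (J : Finset (Fin r)) (d : ℕ) :
    Module.finrank F
        ↥((⨅ i ∈ ((Finset.univ : Finset (Fin r)) \ J), LinearMap.ker (T i)) ⊓ deg d)
      = ((Finset.Icc 1 N).filter fun j => S j ⊆ J ∧ dv j = d).card := by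
  classical
  -- monotonicity of the chain
  have hQmono : ∀ a b, a ≤ b → b ≤ N → Q a ≤ Q b := by
    intro a b hab hbN
    induction b with
    | zero => exact Nat.le_zero.mp hab ▸ le_rfl
    | succ b ih =>
        rcases Nat.lt_or_ge a (b+1) with h | h
        · have h1 : Q a ≤ Q b := ih (by omega) (by omega)
          have h2 : Q b ≤ Q (b+1) := by
            have := hchain (b+1) (Finset.mem_Icc.mpr ⟨by omega, hbN⟩)
            simpa using this
          exact h1.trans h2
        · have : a = b + 1 := by omega
          rw [this]
  -- decomposition
  have hint : DirectSum.IsInternal deg :=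
    (DirectSum.isInternal_submodule_iff_iSupIndep_and_iSup_eq_top deg).mpr ⟨hdeg, hdegtop⟩
  letI : DirectSum.Decomposition deg := hint.chooseDecomposition
  set projL : ℕ → V →ₗ[F] V := fun e =>
    (deg e).subtype ∘ₗ (DirectSum.component F ℕ (fun i => ↥(deg i)) e) ∘ₗ
      (DirectSum.decomposeLinearEquiv deg).toLinearMap with hprojL
  have projL_apply : ∀ e x, projL e x = ↑(DirectSum.decompose deg x e) := by
    intro e x; rfl
  have proj_mem : ∀ e x, projL e x ∈ deg e := by
    intro e x; rw [projL_apply]; exact (DirectSum.decompose deg x e).2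
  have proj_same : ∀ e x, x ∈ deg e → projL e x = x := by
    intro e x h; rw [projL_apply]; exact DirectSum.decompose_of_mem_same deg h
  have proj_ne : ∀ (e e' : ℕ) x, x ∈ deg e → e ≠ e' → projL e' x = 0 := by
    intro e e' x h hne
    rw [projL_apply]
    rw [DirectSum.decompose_of_mem_ne deg h hne]
  -- x is the sum of its components
  have proj_sum : ∀ x : V, x = ∑ e ∈ (DirectSum.decompose deg x).support, projL e x := by
    intro x
    conv_lhs => rw [← DirectSum.sum_support_decompose deg x]
    exact Finset.sum_congr rfl fun e _ => (projL_apply e x).symm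
  have proj_supp : ∀ x e, e ∉ (DirectSum.decompose deg x).support → projL e x = 0 := by
    intro x e he
    rw [projL_apply]
    rw [DFinsupp.notMem_support_iff.mp he]
    rfl
  -- T commutes with projections
  have hTproj : ∀ (i : Fin r) (e : ℕ) (x : V), T i (projL e x) = projL e (T i x) := by
    intro i e x
    conv_rhs => rw [proj_sum x]
    rw [map_sum, map_sum]
    have hterm : ∀ e' : ℕ, projL e (T i (projL e' x))
        = if e' = e then T i (projL e' x) else 0 := by
      intro e'
      have hmem : T i (projL e' x) ∈ deg e' := hT i e' ⟨projL e' x, proj_mem e' x, rfl⟩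
      split_ifs with h
      · rw [← h]; exact proj_same e' _ (h ▸ hmem)
      · exact proj_ne e' e _ hmem h
    rw [Finset.sum_congr rfl (fun e' _ => hterm e')]
    rw [Finset.sum_ite_eq' _ e (fun e' => T i (projL e' x))]
    split_ifs with h
    · rfl
    · rw [proj_supp x e h, map_zero]
  -- splitting elements of `Q n`
  have hsplit : ∀ n ∈ Finset.Icc 1 N, ∀ x ∈ Q n, ∃ q ∈ Q (n-1), ∃ c : F, x = q + c • v n := by
    intro n hn x hx
    have := (hgen n hn).2.2
    rw [this] at hx
    rcases Submodule.mem_sup.mp hx with ⟨q, hq, z, hz, rfl⟩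
    rcases Submodule.mem_span_singleton.mp hz with ⟨c, rfl⟩
    exact ⟨q, hq, c, rfl⟩
  have hcu : ∀ n ∈ Finset.Icc 1 N, ∀ c : F, c • v n ∈ Q (n-1) → c = 0 := by
    intro n hn c hc
    by_contra hc0
    exact (hgen n hn).2.1 (by
      have := Submodule.smul_mem (Q (n-1)) c⁻¹ hc
      rwa [smul_smul, inv_mul_cancel₀ hc0, one_smul] at this)
  -- projections preserve the chain
  have projQ : ∀ n, n ≤ N → ∀ (e : ℕ), ∀ x ∈ Q n, projL e x ∈ Q n := by
    intro n
    induction n with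
    | zero =>
        intro _ e x hx
        rw [hQ0] at hx ⊢
        rw [Submodule.mem_bot] at hx
        rw [hx, map_zero]
        exact Submodule.zero_mem _
    | succ n ih =>
        intro hn e x hx
        have hmem : (n+1) ∈ Finset.Icc 1 N := Finset.mem_Icc.mpr ⟨by omega, hn⟩
        obtain ⟨q, hq, c, rfl⟩ := hsplit (n+1) hmem x hx
        simp only [Nat.add_sub_cancel] at hq
        rw [map_add, map_smul]
        have h1 : projL e q ∈ Q (n+1) := by
          have := ih (by omega) e q hq
          exact hQmono n (n+1) (by omega) hn this
        refine Submodule.add_mem _ h1 (Submodule.smul_mem _ _ ?_)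
        by_cases hd : dv (n+1) = e
        · rw [proj_same e _ (hd ▸ hhom (n+1) hmem)]
          exact (hgen (n+1) hmem).1
        · rw [proj_ne (dv (n+1)) e _ (hhom (n+1) hmem) hd]
          exact Submodule.zero_mem _
  -- degree separation
  have degQ : ∀ n ∈ Finset.Icc 1 N, dv n ≠ d → ∀ x ∈ Q n, x ∈ deg d → x ∈ Q (n-1) := by
    intro n hn hdv x hx hxd
    obtain ⟨q, hq, c, rfl⟩ := hsplit n hn x hx
    have h1 : projL d (q + c • v n) = q + c • v n := proj_same d _ hxd
    rw [map_add, map_smul, proj_ne (dv n) d _ (hhom n hn) hdv, smul_zero, add_zero] at h1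
    rw [← h1]
    have hn1 : n - 1 ≤ N := by
      have := (Finset.mem_Icc.mp hn).2; omega
    exact projQ (n-1) hn1 d q hq
  -- single correction step
  have hstep : ∀ n ∈ Finset.Icc 1 N, ∀ w : V, (∀ i, i ∉ J → T i w ∈ Q n) →
      ∃ w' : V, w' - w ∈ Q n ∧ ∀ i, i ∉ J → T i w' ∈ Q (n-1) := by
    intro n hn w hw
    -- choose coefficients
    have hdecomp : ∀ i : Fin r, ∃ qc : V × F,
        i ∉ J → (qc.1 ∈ Q (n-1) ∧ T i w = qc.1 + qc.2 • v n) := by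
      intro i
      by_cases hi : i ∉ J
      · obtain ⟨q, hq, c, hqc⟩ := hsplit n hn (T i w) (hw i hi)
        exact ⟨(q, c), fun _ => ⟨hq, hqc⟩⟩
      · exact ⟨(0,0), fun h => absurd h hi⟩
    choose qc hqc using hdecomp
    set cf : Fin r → F := fun i => (qc i).2 with hcf
    -- vanishing outside S n
    have hTv : ∀ i : Fin r, i ∉ S n → T i (v n) ∈ Q (n-1) := by
      intro i hi
      have := hact n hn i
      rw [if_neg hi, zero_smul, sub_zero] at this
      exact this
    have hTv' : ∀ i : Fin r, i ∈ S n → T i (v n) + v n ∈ Q (n-1) := by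
      intro i hi
      have := hact n hn i
      rw [if_pos hi, neg_smul, one_smul, sub_neg_eq_add] at this
      exact this
    have f1 : ∀ i, i ∉ J → i ∉ S n → cf i = 0 := by
      intro i hiJ hiS
      obtain ⟨hq, hqc'⟩ := hqc i hiJ
      replace hqc' : T i w = (qc i).1 + cf i • v n := hqc'
      apply hcu n hn
      have hTT : T i (T i w) = -(T i w) := by
        have := congrArg (fun (f : Module.End F V) => f w) (hsq i)
        simpa using this
      have h2 : T i (T i w) = T i (qc i).1 + cf i • T i (v n) := by
        rw [hqc', map_add, map_smul]
      have h3 : cf i • v n = -(T i (qc i).1) - cf i • T i (v n) - (qc i).1 := by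
        have := hTT
        rw [h2, hqc'] at this
        linear_combination (norm := module) this
      rw [h3]
      refine Submodule.sub_mem _ (Submodule.sub_mem _ (Submodule.neg_mem _ ?_)
        (Submodule.smul_mem _ _ (hTv i hiS))) hq
      exact hstable (n-1) i ⟨(qc i).1, hq, rfl⟩
    -- braid compatibility
    have f2 : ∀ i i', i ∉ J → i' ∉ J → i ∈ S n → i' ∈ S n → cf i = cf i' := by
      intro i i' hiJ hi'J hiS hi'S
      rcases eq_or_ne i i' with rfl | hne
      · rfl
      obtain ⟨m, hm1, hbr⟩ := hbraid1 i i' hne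
      set SS : Finset (Fin r) := {i, i'} with hSS
      have hSmem : ∀ x ∈ SS, x ∈ S n := by
        intro x hx
        rcases Finset.mem_insert.mp hx with rfl | hx
        · exact hiS
        · rw [Finset.mem_singleton.mp hx]; exact hi'S
      have hSn' : ∀ x ∈ SS, T x (v n) + v n ∈ Q (n-1) := fun x hx => hTv' x (hSmem x hx)
      have hwc : ∀ x ∈ SS, T x w - cf x • v n ∈ Q (n-1) := by
        intro x hx
        have hxJ : x ∉ J := by
          rcases Finset.mem_insert.mp hx with rfl | hx
          · exact hiJ
          · rw [Finset.mem_singleton.mp hx]; exact hi'J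
        obtain ⟨hq, hqc'⟩ := hqc x hxJ
        replace hqc' : T x w = (qc x).1 + cf x • v n := hqc'
        rw [hqc']
        simpa using hq
      have hL1 : ∀ x ∈ altWord i i' m, x ∈ SS := by
        intro x hx
        rcases altWord_mem i i' m x hx with rfl | rfl
        · exact Finset.mem_insert_self _ _
        · exact Finset.mem_insert_of_mem (Finset.mem_singleton_self _)
      have hL2 : ∀ x ∈ altWord i' i m, x ∈ SS := by
        intro x hx
        rcases altWord_mem i' i m x hx with rfl | rfl
        · exact Finset.mem_insert_of_mem (Finset.mem_singleton_self _)
        · exact Finset.mem_insert_self _ _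
      have hne1 := altWord_ne_nil i i' hm1
      have hne2 := altWord_ne_nil i' i hm1
      have ha := list_action T (Q (n-1)) (fun x => hstable (n-1) x) (v n) SS hSn' w cf hwc
        (altWord i i' m) hne1 hL1
      have hb := list_action T (Q (n-1)) (fun x => hstable (n-1) x) (v n) SS hSn' w cf hwc
        (altWord i' i m) hne2 hL2
      rw [hbr] at ha
      have hdiff' : ((-1:F)^(m-1) * cf ((altWord i i' m).getLast hne1)) • v n
          - ((-1:F)^(m-1) * cf ((altWord i' i m).getLast hne2)) • v n ∈ Q (n-1) := by
        have h := Submodule.sub_mem _ hb ha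
        rw [altWord_length i i' m, altWord_length i' i m] at h
        convert h using 1
        module
      have hdiff : (((-1:F)^(m-1)) * (cf ((altWord i i' m).getLast hne1)
          - cf ((altWord i' i m).getLast hne2))) • v n ∈ Q (n-1) := by
        rw [mul_sub, sub_smul]
        exact hdiff'
      have hceq : cf ((altWord i i' m).getLast hne1) = cf ((altWord i' i m).getLast hne2) := by
        have := hcu n hn _ hdiff
        have hpne : ((-1:F)^(m-1)) ≠ 0 := by
          apply pow_ne_zero; norm_num
        have := mul_eq_zero.mp this
        rcases this with h | h
        · exact absurd h hpne
        · exact sub_eq_zero.mp h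
      rw [altWord_getLast m i i' hne1, altWord_getLast m i' i hne2] at hceq
      rcases Nat.mod_two_eq_zero_or_one m with h0 | h1
      · rw [if_neg (by omega), if_neg (by omega)] at hceq
        exact hceq.symm
      · rw [if_pos h1, if_pos h1] at hceq
        exact hceq
    -- now define the correction
    by_cases hex : ∃ i, i ∉ J ∧ i ∈ S n
    · obtain ⟨i₀, hi₀J, hi₀S⟩ := hex
      refine ⟨w + cf i₀ • v n, ?_, ?_⟩
      · simpa using Submodule.smul_mem _ _ (hgen n hn).1
      · intro i hiJ
        obtain ⟨hq, hqc'⟩ := hqc i hiJ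
        replace hqc' : T i w = (qc i).1 + cf i • v n := hqc'
        by_cases hiS : i ∈ S n
        · have hci : cf i = cf i₀ := f2 i i₀ hiJ hi₀J hiS hi₀S
          have hTm : T i (w + cf i₀ • v n) = (qc i).1 + cf i₀ • (T i (v n) + v n) := by
            rw [map_add, map_smul, hqc', hci]
            module
          rw [hTm]
          exact Submodule.add_mem _ hq (Submodule.smul_mem _ _ (hTv' i hiS))
        · have hci : cf i = 0 := f1 i hiJ hiS
          have hTm : T i (w + cf i₀ • v n) = (qc i).1 + cf i₀ • T i (v n) := by
            rw [map_add, map_smul, hqc', hci]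
            module
          rw [hTm]
          exact Submodule.add_mem _ hq (Submodule.smul_mem _ _ (hTv i hiS))
    · push_neg at hex
      refine ⟨w, by simp, ?_⟩
      intro i hiJ
      obtain ⟨hq, hqc'⟩ := hqc i hiJ
      replace hqc' : T i w = (qc i).1 + cf i • v n := hqc'
      rw [hqc', f1 i hiJ (hex i hiJ), zero_smul, add_zero]
      exact hq
  -- full correction
  have hcorr : ∀ j ∈ Finset.Icc 1 N, S j ⊆ J →
      ∃ w : V, w - v j ∈ Q (j-1) ∧ ∀ i, i ∉ J → T i w = 0 := by
    intro j hj hSj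
    have hjN := Finset.mem_Icc.mp hj
    have desc : ∀ t, t ≤ j - 1 →
        ∃ w : V, w - v j ∈ Q (j-1) ∧ ∀ i, i ∉ J → T i w ∈ Q (j-1-t) := by
      intro t
      induction t with
      | zero =>
          intro _
          refine ⟨v j, by simp, ?_⟩
          intro i hiJ
          have hiS : i ∉ S j := fun h => hiJ (hSj h)
          have := hact j hj i
          rw [if_neg hiS, zero_smul, sub_zero] at this
          simpa using this
      | succ t ih =>
          intro ht
          obtain ⟨w, hw1, hw2⟩ := ih (by omega)
          have hn1 : 1 ≤ j - 1 - t := by omega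
          have hnN : j - 1 - t ≤ N := by omega
          have hnI : j - 1 - t ∈ Finset.Icc 1 N := Finset.mem_Icc.mpr ⟨hn1, hnN⟩
          obtain ⟨w', hw'1, hw'2⟩ := hstep (j-1-t) hnI w hw2
          refine ⟨w', ?_, ?_⟩
          · have he : w' - v j = (w' - w) + (w - v j) := by module
            rw [he]
            exact Submodule.add_mem _ (hQmono (j-1-t) (j-1) (by omega) (by omega) hw'1) hw1
          · intro i hiJ
            have he : j - 1 - (t+1) = (j - 1 - t) - 1 := by omega
            rw [he]
            exact hw'2 i hiJ
    obtain ⟨w, hw1, hw2⟩ := desc (j-1) le_rfl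
    refine ⟨w, hw1, ?_⟩
    intro i hiJ
    have := hw2 i hiJ
    rw [Nat.sub_self, hQ0, Submodule.mem_bot] at this
    exact this
  -- the subspace Z
  set Z : Submodule F V :=
    (⨅ i ∈ ((Finset.univ : Finset (Fin r)) \ J), LinearMap.ker (T i)) ⊓ deg d with hZ
  have hZmem : ∀ x : V, x ∈ Z ↔ (∀ i, i ∉ J → T i x = 0) ∧ x ∈ deg d := by
    intro x
    rw [hZ, Submodule.mem_inf]
    simp only [Submodule.mem_iInf, Finset.mem_sdiff, Finset.mem_univ, true_and,
      LinearMap.mem_ker]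
  -- main induction along the filtration
  have main : ∀ n, n ≤ N → Module.finrank F ↥(Z ⊓ Q n)
      = ((Finset.Icc 1 n).filter fun j => S j ⊆ J ∧ dv j = d).card := by
    intro n
    induction n with
    | zero =>
        intro _
        rw [hQ0, inf_bot_eq]
        simp
    | succ n ih =>
        intro hn
        have hmemI : (n+1) ∈ Finset.Icc 1 N := Finset.mem_Icc.mpr ⟨by omega, hn⟩
        have hIcc : Finset.Icc 1 (n+1) = insert (n+1) (Finset.Icc 1 n) :=
          (Finset.insert_Icc_right_eq_Icc_add_one (by omega)).symm
        have hnotmem : (n+1) ∉ Finset.Icc 1 n := by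
          simp only [Finset.mem_Icc]; omega
        have hQle : Q n ≤ Q (n+1) := by
          have := hchain (n+1) hmemI
          simpa using this
        have hvQ : v (n+1) ∈ Q (n+1) := (hgen (n+1) hmemI).1
        have hvnQ : v (n+1) ∉ Q n := by
          have := (hgen (n+1) hmemI).2.1
          simpa using this
        by_cases hP : S (n+1) ⊆ J ∧ dv (n+1) = d
        · obtain ⟨w, hw1, hw2⟩ := hcorr (n+1) hmemI hP.1
          simp only [Nat.add_sub_cancel] at hw1
          set w'' := projL d w with hw''def
          have hw''ker : ∀ i, i ∉ J → T i w'' = 0 := by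
            intro i hiJ
            rw [hw''def, hTproj, hw2 i hiJ, map_zero]
          have hw''deg : w'' ∈ deg d := proj_mem d w
          have hw''Z : w'' ∈ Z := (hZmem w'').mpr ⟨hw''ker, hw''deg⟩
          have hsub : w'' - v (n+1) ∈ Q n := by
            have h1 : projL d (w - v (n+1)) ∈ Q n := projQ n (by omega) d _ hw1
            have hvdeg : v (n+1) ∈ deg d := by rw [← hP.2]; exact hhom (n+1) hmemI
            rw [map_sub, proj_same d (v (n+1)) hvdeg] at h1
            exact h1
          have hw''Q : w'' ∈ Q (n+1) := by
            have he : w'' = (w'' - v (n+1)) + v (n+1) := by module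
            rw [he]
            exact Submodule.add_mem _ (hQle hsub) hvQ
          have hw''nQ : w'' ∉ Q n := by
            intro h
            apply hvnQ
            have he : v (n+1) = w'' - (w'' - v (n+1)) := by module
            rw [he]
            exact Submodule.sub_mem _ h hsub
          have hdecZ : Z ⊓ Q (n+1) = (Z ⊓ Q n) ⊔ Submodule.span F {w''} := by
            apply le_antisymm
            · intro x hx
              obtain ⟨hxZ, hxQ⟩ := Submodule.mem_inf.mp hx
              obtain ⟨q, hq, cc, rfl⟩ := hsplit (n+1) hmemI x hxQ
              simp only [Nat.add_sub_cancel] at hq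
              have hxw : q + cc • v (n+1) - cc • w'' ∈ Z ⊓ Q n := by
                apply Submodule.mem_inf.mpr
                constructor
                · exact Submodule.sub_mem _ hxZ (Submodule.smul_mem _ _ hw''Z)
                · have he : q + cc • v (n+1) - cc • w'' = q - cc • (w'' - v (n+1)) := by
                    module
                  rw [he]
                  exact Submodule.sub_mem _ hq (Submodule.smul_mem _ _ hsub)
              apply Submodule.mem_sup.mpr
              refine ⟨_, hxw, cc • w'',
                Submodule.smul_mem _ _ (Submodule.mem_span_singleton_self _), by module⟩
            · apply sup_le
              · exact inf_le_inf le_rfl hQle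
              · rw [Submodule.span_singleton_le_iff_mem]
                exact Submodule.mem_inf.mpr ⟨hw''Z, hw''Q⟩
          have hw''ne : w'' ≠ 0 := fun h => hw''nQ (h ▸ Submodule.zero_mem _)
          have hdisj : (Z ⊓ Q n) ⊓ Submodule.span F {w''} = ⊥ := by
            rw [eq_bot_iff]
            intro x hx
            obtain ⟨hx1, hx2⟩ := Submodule.mem_inf.mp hx
            obtain ⟨cc, rfl⟩ := Submodule.mem_span_singleton.mp hx2
            rcases eq_or_ne cc 0 with rfl | hcc
            · simp
            · exfalso
              apply hw''nQ
              have h3 : w'' = cc⁻¹ • (cc • w'') := by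
                rw [smul_smul, inv_mul_cancel₀ hcc, one_smul]
              rw [h3]
              exact Submodule.smul_mem _ _ (Submodule.mem_inf.mp hx1).2
          have hrank := Submodule.finrank_sup_add_finrank_inf_eq (Z ⊓ Q n)
            (Submodule.span F {w''})
          rw [hdisj, finrank_bot, add_zero, finrank_span_singleton hw''ne] at hrank
          rw [hdecZ, hrank, ih (by omega), hIcc, Finset.filter_insert, if_pos hP,
            Finset.card_insert_of_notMem (fun h => hnotmem (Finset.mem_filter.mp h).1)]
        · have hle : Z ⊓ Q (n+1) ≤ Q n := by
            intro x hx
            obtain ⟨hxZ, hxQ⟩ := Submodule.mem_inf.mp hx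
            have hxdeg : x ∈ deg d := ((hZmem x).mp hxZ).2
            by_cases hdv : dv (n+1) = d
            · have hSn : ¬ S (n+1) ⊆ J := fun h => hP ⟨h, hdv⟩
              obtain ⟨i, hiS, hiJ⟩ := Finset.not_subset.mp hSn
              obtain ⟨q, hq, cc, rfl⟩ := hsplit (n+1) hmemI x hxQ
              simp only [Nat.add_sub_cancel] at hq
              have hTx : T i (q + cc • v (n+1)) = 0 := ((hZmem _).mp hxZ).1 i hiJ
              have hTv1 : T i (v (n+1)) + v (n+1) ∈ Q n := by
                have := hact (n+1) hmemI i
                rw [if_pos hiS, neg_smul, one_smul, sub_neg_eq_add] at this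
                simpa using this
              have h4 : cc • v (n+1) = cc • (T i (v (n+1)) + v (n+1)) + T i q
                  - T i (q + cc • v (n+1)) := by
                rw [map_add, map_smul]
                module
              rw [hTx, sub_zero] at h4
              have hccQ : cc • v (n+1) ∈ Q n := by
                rw [h4]
                exact Submodule.add_mem _ (Submodule.smul_mem _ _ hTv1)
                  (hstable n i ⟨q, hq, rfl⟩)
              have hcc0 : cc = 0 := by
                apply hcu (n+1) hmemI
                simpa using hccQ
              rw [hcc0, zero_smul, add_zero]
              exact hq
            · have := degQ (n+1) hmemI hdv _ hxQ hxdeg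
              simpa using this
          have hZeq : Z ⊓ Q (n+1) = Z ⊓ Q n :=
            le_antisymm (le_inf inf_le_left hle) (inf_le_inf le_rfl hQle)
          rw [hZeq, ih (by omega), hIcc, Finset.filter_insert, if_neg hP]
  have hfin := main N le_rfl
  rw [hQN, inf_top_eq] at hfin
  exact hfin


end Lemma61

end

/-- **Lemma 6.1.** -/
theorem stmt_11 (r : ℕ) (M : CoxeterMatrix (Fin r)) (W : Type*) [Group W] [Finite W]
    (cs : CoxeterSystem M W)
    (F : Type*) [Field F] (V : Type*) [AddCommGroup V] [Module F V]
    [FiniteDimensional F V]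
    (deg : ℕ → Submodule F V) (hdeg : iSupIndep deg) (hdegtop : (⨆ d, deg d) = ⊤)
    (T : Fin r → Module.End F V)
    (hT : ∀ (i : Fin r) (d : ℕ), (deg d).map (T i) ≤ deg d)
    (hsq : ∀ i : Fin r, T i * T i = -T i)
    (hbraid : ∀ i j : Fin r, i ≠ j →
      ((altWord i j (M i j)).map T).prod = ((altWord j i (M i j)).map T).prod)
    (N : ℕ) (Q : ℕ → Submodule F V) (S : ℕ → Finset (Fin r)) (dv : ℕ → ℕ) (v : ℕ → V)
    (hQ0 : Q 0 = ⊥) (hQN : Q N = ⊤)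
    (hchain : ∀ j ∈ Finset.Icc 1 N, Q (j - 1) ≤ Q j)
    (hhom : ∀ j ∈ Finset.Icc 1 N, v j ∈ deg (dv j))
    (hgen : ∀ j ∈ Finset.Icc 1 N,
      v j ∈ Q j ∧ v j ∉ Q (j - 1) ∧ Q j = Q (j - 1) ⊔ Submodule.span F {v j})
    (hstable : ∀ (j : ℕ) (i : Fin r), (Q j).map (T i) ≤ Q j)
    (hact : ∀ j ∈ Finset.Icc 1 N, ∀ i : Fin r,
      T i (v j) - (if i ∈ S j then (-1 : F) else 0) • v j ∈ Q (j - 1)) :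
    ∀ (I : Finset (Fin r)) (d : ℕ),
      (((Finset.Icc 1 N).filter fun j => S j = I ∧ dv j = d).card : ℤ)
        = ∑ J ∈ I.powerset, (-1 : ℤ) ^ (I.card - J.card) *
            (Module.finrank F
              ↥((⨅ j ∈ ((Finset.univ : Finset (Fin r)) \ J), LinearMap.ker (T j))
                 ⊓ deg d) : ℤ) := by
  classical
  intro I d
  have hbraid1 : ∀ i i' : Fin r, i ≠ i' → ∃ m, 1 ≤ m ∧
      ((altWord i i' m).map T).prod = ((altWord i' i m).map T).prod := by
    intro i i' h
    refine ⟨M i i', ?_, hbraid i i' h⟩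
    have := Lemma61.M_entry_ne_zero cs h
    omega
  have key : ∀ J : Finset (Fin r),
      Module.finrank F
          ↥((⨅ i ∈ ((Finset.univ : Finset (Fin r)) \ J), LinearMap.ker (T i)) ⊓ deg d)
        = ((Finset.Icc 1 N).filter fun j => S j ⊆ J ∧ dv j = d).card := fun J =>
    Lemma61.key_count deg hdeg hdegtop T hT hsq hbraid1 N Q S dv v hQ0 hQN hchain hhom hgen
      hstable hact J d
  have hRHS : ∑ J ∈ I.powerset, (-1 : ℤ) ^ (I.card - J.card) *
        (Module.finrank F
          ↥((⨅ j ∈ ((Finset.univ : Finset (Fin r)) \ J), LinearMap.ker (T j))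
             ⊓ deg d) : ℤ)
      = ∑ J ∈ I.powerset, (-1 : ℤ) ^ (I.card - J.card) *
          ∑ j ∈ Finset.Icc 1 N, (if S j ⊆ J ∧ dv j = d then (1:ℤ) else 0) := by
    apply Finset.sum_congr rfl
    intro J _
    rw [key J]
    congr 1
    rw [Finset.card_filter]
    push_cast
    rfl
  rw [hRHS]
  have hswap : ∑ J ∈ I.powerset, (-1 : ℤ) ^ (I.card - J.card) *
        ∑ j ∈ Finset.Icc 1 N, (if S j ⊆ J ∧ dv j = d then (1:ℤ) else 0)
      = ∑ j ∈ Finset.Icc 1 N, ∑ J ∈ I.powerset, (-1 : ℤ) ^ (I.card - J.card) *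
          (if S j ⊆ J ∧ dv j = d then (1:ℤ) else 0) := by
    rw [Finset.sum_congr rfl (fun (J : Finset (Fin r)) (_ : J ∈ I.powerset) =>
      Finset.mul_sum (Finset.Icc 1 N)
        (fun j => if S j ⊆ J ∧ dv j = d then (1:ℤ) else 0) ((-1 : ℤ) ^ (I.card - J.card)))]
    exact Finset.sum_comm
  rw [hswap]
  have hterm : ∀ j ∈ Finset.Icc 1 N,
      (∑ J ∈ I.powerset, (-1 : ℤ) ^ (I.card - J.card) *
        (if S j ⊆ J ∧ dv j = d then (1:ℤ) else 0))
      = (if S j = I ∧ dv j = d then (1:ℤ) else 0) := by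
    intro j _
    by_cases hdv : dv j = d
    · have : ∀ J : Finset (Fin r), (if S j ⊆ J ∧ dv j = d then (1:ℤ) else 0)
          = (if S j ⊆ J then (1:ℤ) else 0) := by
        intro J
        by_cases h : S j ⊆ J <;> simp [h, hdv]
      rw [Finset.sum_congr rfl (fun J _ => by rw [this J]), Lemma61.mobius I (S j)]
      by_cases h : S j = I <;> simp [h, hdv]
    · have : ∀ J : Finset (Fin r), (if S j ⊆ J ∧ dv j = d then (1:ℤ) else 0) = 0 := by
        intro J
        simp [hdv]
      rw [Finset.sum_congr rfl (fun J _ => by rw [this J, mul_zero]),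
        Finset.sum_const_zero]
      simp [hdv]
  rw [Finset.sum_congr rfl hterm, ← Finset.sum_filter, Finset.sum_const, nsmul_eq_mul, mul_one]
end

section
/- Let q be a power of a prime p, G = GL(n, 𝔽_q), B its upper triangular Borel subgroup, and F a field of characteristic p. For every subset J ⊆ {1,…,n−1}, the subspace {v ∈ 1_B^G : T_j(v) = 0 for all j ∉ J} of the flag variety module 1_B^G equals the F-span of the elements u_g = ∑_{C ∈ B\G, C ⊆ P_J·g} C for g ∈ G; in particular its dimension equals the number of right P_J-cosets in G. (The identification (1_B^G)_α = 1_{P_α}^G from the proof of Theorem 6.2.) -/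
open Matrix

/-- The Borel subgroup `B` of invertible upper triangular matrices in `GL(n, F_q)`. -/
def borelGL (n : ℕ) (Fq : Type*) [Field Fq] [DecidableEq Fq] :
    Subgroup (GL (Fin n) Fq) where
  carrier := {g | ((g : Matrix (Fin n) (Fin n) Fq)).BlockTriangular id}
  one_mem' := Matrix.blockTriangular_one
  mul_mem' := fun ha hb => by
    simpa [Set.mem_setOf_eq, Units.val_mul] using ha.mul hb
  inv_mem' := by
    intro g hg
    have : Invertible (g : Matrix (Fin n) (Fin n) Fq) := g.invertible
    simpa [Set.mem_setOf_eq, Matrix.coe_units_inv] using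
      Matrix.blockTriangular_inv_of_blockTriangular hg

instance borelGL.decMem (n : ℕ) (Fq : Type*) [Field Fq] [DecidableEq Fq] :
    DecidablePred (· ∈ borelGL n Fq) := fun g =>
  @decidable_of_iff _ (∀ i j : Fin n, j < i → (g : Matrix (Fin n) (Fin n) Fq) i j = 0)
    ⟨fun h _ _ hij => h _ _ hij, fun h i j hij => h hij⟩
    (@Fintype.decidableForallFintype _ _ (fun i => @Fintype.decidableForallFintype _ _ (fun j => inferInstance) _) _)

/-- The permutation matrix of `σ` as an element of `GL(n, F_q)`. -/
noncomputable def permGL {n : ℕ} (Fq : Type*) [Field Fq] [DecidableEq Fq]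
    (σ : Equiv.Perm (Fin n)) : GL (Fin n) Fq :=
  ((Matrix.isUnit_iff_isUnit_det (σ.permMatrix Fq)).mpr (by
    rw [Matrix.det_permutation]
    rcases Int.units_eq_one_or (Equiv.Perm.sign σ) with h | h <;> simp [h])).unit

/-- The set of right `B`-cosets in `G = GL(n, F_q)`, i.e. the index set `B\G` of the basis
of the flag variety module `1_B^G`. -/
abbrev FlagIdx (n : ℕ) (Fq : Type*) [Field Fq] [DecidableEq Fq] :=
  Quotient (QuotientGroup.rightRel (borelGL n Fq))

noncomputable instance (n : ℕ) (Fq : Type*) [Field Fq] [Fintype Fq] [DecidableEq Fq] :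
    Fintype (FlagIdx n Fq) := Fintype.ofFinite _

/-- The 0-Hecke operator `T_i` on the flag variety module `1_B^G`: the basis vector of a
right coset `Bg` is sent to the sum of the basis vectors of the right `B`-cosets contained
in `B·s_i·B·g`. -/
noncomputable def flagT (n : ℕ) (Fq : Type*) [Field Fq] [Fintype Fq] [DecidableEq Fq]
    (F : Type*) [Field F] (i : ℕ) :
    (FlagIdx n Fq →₀ F) →ₗ[F] (FlagIdx n Fq →₀ F) :=
  Finsupp.lsum F fun c => LinearMap.toSpanSingleton F _
    (∑ c' ∈ Finset.univ.filter (fun c' : FlagIdx n Fq =>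
        ∃ b ∈ borelGL n Fq, ∃ b' ∈ borelGL n Fq,
          (Quotient.out c' : GL (Fin n) Fq) = b * permGL Fq (sw n i) * b' * Quotient.out c),
      Finsupp.single c' (1 : F))

/-- The standard parabolic subgroup `P_J = B ⟨s_j : j ∉ J⟩ B`, as the subgroup generated
by `B` together with the simple reflections `s_j`, `j ∉ J`. -/
def parab (n : ℕ) (Fq : Type*) [Field Fq] [DecidableEq Fq] (J : Finset ℕ) :
    Subgroup (GL (Fin n) Fq) :=
  borelGL n Fq ⊔ Subgroup.closure
    {g | ∃ j : ℕ, j + 1 < n ∧ j ∉ J ∧ g = permGL Fq (sw n j)}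

namespace Stmt12

open Finset

variable {n : ℕ} {Fq : Type*} [Field Fq] [DecidableEq Fq]

theorem mem_borel_iff {g : GL (Fin n) Fq} :
    g ∈ borelGL n Fq ↔ ∀ i k : Fin n, k < i → (g : Matrix (Fin n) (Fin n) Fq) i k = 0 :=
  ⟨fun h i k hik => h hik, fun h i k hik => h i k hik⟩

theorem permGL_val (σ : Equiv.Perm (Fin n)) :
    ((permGL Fq σ : GL (Fin n) Fq) : Matrix (Fin n) (Fin n) Fq) = σ.permMatrix Fq := rfl

/-- index `j` as element of `Fin n` -/
def ia {n j : ℕ} (hj : j + 1 < n) : Fin n := ⟨j, Nat.lt_of_succ_lt hj⟩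
/-- index `j+1` as element of `Fin n` -/
def ib {n j : ℕ} (hj : j + 1 < n) : Fin n := ⟨j + 1, hj⟩

theorem ia_lt_ib {j : ℕ} (hj : j + 1 < n) : ia hj < ib hj := by
  simp [ia, ib, Fin.lt_def]

theorem sw_eq {j : ℕ} (hj : j + 1 < n) : sw n j = Equiv.swap (ia hj) (ib hj) := dif_pos hj

theorem sw_val {j : ℕ} (hj : j + 1 < n) (i : Fin n) :
    (sw n j i : ℕ) = if (i : ℕ) = j then j + 1 else if (i : ℕ) = j + 1 then j else i := by
  rw [sw_eq hj]
  rcases eq_or_ne i (ia hj) with rfl | h1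
  · rw [Equiv.swap_apply_left]; simp [ia, ib]
  · rcases eq_or_ne i (ib hj) with rfl | h2
    · rw [Equiv.swap_apply_right]; simp [ia, ib]
    · rw [Equiv.swap_apply_of_ne_of_ne h1 h2]
      have h1' : (i : ℕ) ≠ j := fun h => h1 (by simp [ia, Fin.ext_iff, h])
      have h2' : (i : ℕ) ≠ j + 1 := fun h => h2 (by simp [ib, Fin.ext_iff, h])
      simp [h1', h2']

theorem sw_mul_self (j : ℕ) : (sw n j) * (sw n j) = 1 := by
  unfold sw; split
  · exact Equiv.swap_mul_self _ _
  · exact mul_one 1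

theorem permMatrix_apply (σ : Equiv.Perm (Fin n)) (i k : Fin n) :
    (σ.permMatrix Fq) i k = if k = σ i then 1 else 0 := by
  simp [Equiv.Perm.permMatrix, PEquiv.toMatrix, Equiv.toPEquiv, Option.mem_def, eq_comm]

theorem S_mul_S {j : ℕ} : permGL Fq (sw n j) * permGL Fq (sw n j) = 1 := by
  ext i k
  show ((sw n j).permMatrix Fq * (sw n j).permMatrix Fq) i k = (1 : Matrix (Fin n) (Fin n) Fq) i k
  rw [PEquiv.toMatrix_toPEquiv_mul]
  rw [Matrix.submatrix_apply, permMatrix_apply, id]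
  by_cases h : k = sw n j (sw n j i)
  · have : sw n j (sw n j i) = i := by
      have := congrArg (fun σ => σ i) (sw_mul_self (n := n) j); simpa using this
    rw [if_pos h, h, this, Matrix.one_apply_eq]
  · have hki : k ≠ i := by
      intro e; apply h
      have : sw n j (sw n j i) = i := by
        have := congrArg (fun σ => σ i) (sw_mul_self (n := n) j); simpa using this
      rw [this, e]
    rw [if_neg h, Matrix.one_apply_ne' hki]

theorem S_inv {j : ℕ} : (permGL Fq (sw n j))⁻¹ = permGL Fq (sw n j) :=
  inv_eq_of_mul_eq_one_right S_mul_S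

theorem S_val_mul {j : ℕ} (M : Matrix (Fin n) (Fin n) Fq) (i k : Fin n) :
    (((permGL Fq (sw n j) : GL (Fin n) Fq) : Matrix (Fin n) (Fin n) Fq) * M) i k
      = M (sw n j i) k := by
  show ((sw n j).permMatrix Fq * M) i k = _
  rw [PEquiv.toMatrix_toPEquiv_mul]; rfl

theorem mul_S_val {j : ℕ} (M : Matrix (Fin n) (Fin n) Fq) (i k : Fin n) :
    (M * ((permGL Fq (sw n j) : GL (Fin n) Fq) : Matrix (Fin n) (Fin n) Fq)) i k
      = M i (sw n j k) := by
  show (M * (sw n j).permMatrix Fq) i k = _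
  rw [PEquiv.mul_toMatrix_toPEquiv, Matrix.submatrix_apply, id]
  congr 1
  have : sw n j (sw n j k) = k := by
    have := congrArg (fun σ => σ k) (sw_mul_self (n := n) j); simpa using this
  conv_lhs => rw [← this, Equiv.symm_apply_apply]

end Stmt12
namespace Stmt12

variable {n : ℕ} {Fq : Type*} [Field Fq] [DecidableEq Fq]

/-- block function collapsing `j` and `j+1` -/
def bj (j : ℕ) : Fin n → ℕ := fun i => if (i : ℕ) = j + 1 then j else i

theorem bj_lt_reflect {j : ℕ} {i k : Fin n} (h : bj j k < bj j i) : k < i := by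
  rw [Fin.lt_def]; unfold bj at h; split_ifs at h <;> omega

theorem bj_lt_of {j : ℕ} {i k : Fin n} (hik : k < i) (hne : ¬((i : ℕ) = j + 1 ∧ (k : ℕ) = j)) :
    bj j k < bj j i := by
  rw [Fin.lt_def] at hik; unfold bj; split_ifs <;> omega

/-- The minimal parabolic subgroup attached to the simple reflection `s_j`. -/
def miniP (n : ℕ) (Fq : Type*) [Field Fq] [DecidableEq Fq] (j : ℕ) :
    Subgroup (GL (Fin n) Fq) where
  carrier := {g | ((g : Matrix (Fin n) (Fin n) Fq)).BlockTriangular (bj j)}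
  one_mem' := Matrix.blockTriangular_one
  mul_mem' := fun ha hb => by
    simpa [Set.mem_setOf_eq, Units.val_mul] using ha.mul hb
  inv_mem' := by
    intro g hg
    have : Invertible (g : Matrix (Fin n) (Fin n) Fq) := g.invertible
    simpa [Set.mem_setOf_eq, Matrix.coe_units_inv] using
      Matrix.blockTriangular_inv_of_blockTriangular hg

theorem mem_miniP_iff {j : ℕ} {g : GL (Fin n) Fq} :
    g ∈ miniP n Fq j ↔ ∀ i k : Fin n, bj j k < bj j i →
      (g : Matrix (Fin n) (Fin n) Fq) i k = 0 :=
  ⟨fun h i k hik => h hik, fun h i k hik => h i k hik⟩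

theorem borel_le_miniP {j : ℕ} : borelGL n Fq ≤ miniP n Fq j := fun g hg => by
  rw [mem_miniP_iff]
  exact fun i k h => mem_borel_iff.mp hg i k (bj_lt_reflect h)

theorem bj_sw {j : ℕ} (hj : j + 1 < n) (i : Fin n) : bj j (sw n j i) = bj j i := by
  unfold bj
  rw [sw_val hj]
  split_ifs <;> omega

theorem S_mem_miniP {j : ℕ} (hj : j + 1 < n) : permGL Fq (sw n j) ∈ miniP n Fq j := by
  rw [mem_miniP_iff]
  intro i k h
  rw [permGL_val, permMatrix_apply]
  rw [if_neg]
  intro hk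
  rw [hk, bj_sw hj] at h
  exact lt_irrefl _ h

theorem S_not_mem_borel {j : ℕ} (hj : j + 1 < n) : permGL Fq (sw n j) ∉ borelGL n Fq := by
  intro hB
  have := mem_borel_iff.mp hB (ib hj) (ia hj) (ia_lt_ib hj)
  rw [permGL_val, permMatrix_apply, sw_eq hj, Equiv.swap_apply_right, if_pos rfl] at this
  exact one_ne_zero this

/-- The elementary unipotent `1 + t E_{j,j+1}` as an element of `GL`. -/
def elemGL {j : ℕ} (hj : j + 1 < n) (t : Fq) : GL (Fin n) Fq where
  val := 1 + Matrix.single (ia hj) (ib hj) t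
  inv := 1 + Matrix.single (ia hj) (ib hj) (-t)
  val_inv := by
    have h0 : Matrix.single (ia hj) (ib hj) t *
        Matrix.single (ia hj) (ib hj) (-t) = 0 :=
      Matrix.single_mul_single_of_ne _ _ _ _ (ne_of_gt (ia_lt_ib hj)) _
    rw [mul_add, add_mul, add_mul, h0, mul_one, one_mul, add_zero, mul_one,
      add_assoc, ← Matrix.single_add, add_neg_cancel]
    simp
  inv_val := by
    have h0 : Matrix.single (ia hj) (ib hj) (-t) *
        Matrix.single (ia hj) (ib hj) t = 0 :=
      Matrix.single_mul_single_of_ne _ _ _ _ (ne_of_gt (ia_lt_ib hj)) _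
    rw [mul_add, add_mul, add_mul, h0, mul_one, one_mul, add_zero, mul_one,
      add_assoc, ← Matrix.single_add, neg_add_cancel]
    simp
  
theorem elemGL_val {j : ℕ} (hj : j + 1 < n) (t : Fq) :
    ((elemGL hj t : GL (Fin n) Fq) : Matrix (Fin n) (Fin n) Fq)
      = 1 + Matrix.single (ia hj) (ib hj) t := rfl

theorem elemGL_inv {j : ℕ} (hj : j + 1 < n) (t : Fq) :
    (elemGL hj t)⁻¹ = elemGL hj (-t) := by
  ext : 1
  rfl

theorem elemGL_mem_borel {j : ℕ} (hj : j + 1 < n) (t : Fq) :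
    elemGL hj t ∈ borelGL n Fq := by
  rw [mem_borel_iff]
  intro i k hik
  rw [elemGL_val, Matrix.add_apply, Matrix.one_apply_ne' (ne_of_lt hik)]
  rw [Matrix.single_apply_of_ne]
  · exact add_zero 0
  · rintro ⟨rfl, rfl⟩
    exact absurd (lt_trans (ia_lt_ib hj) hik) (lt_irrefl _)

theorem borel_diag_ne_zero {g : GL (Fin n) Fq} (hg : g ∈ borelGL n Fq) (i : Fin n) :
    (g : Matrix (Fin n) (Fin n) Fq) i i ≠ 0 := by
  have hdet : IsUnit ((g : Matrix (Fin n) (Fin n) Fq).det) :=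
    (Matrix.isUnit_iff_isUnit_det _).mp g.isUnit
  rw [Matrix.det_of_upperTriangular hg] at hdet
  intro h0
  rw [isUnit_iff_ne_zero] at hdet
  exact hdet (Finset.prod_eq_zero (Finset.mem_univ i) h0)

end Stmt12
namespace Stmt12

variable {n : ℕ} {Fq : Type*} [Field Fq] [DecidableEq Fq]

theorem ia_val {j : ℕ} (hj : j + 1 < n) : ((ia hj : Fin n) : ℕ) = j := rfl
theorem ib_val {j : ℕ} (hj : j + 1 < n) : ((ib hj : Fin n) : ℕ) = j + 1 := rfl

theorem sw_lt {j : ℕ} (hj : j + 1 < n) {i k : Fin n} (hik : k < i)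
    (hne : ¬((i : ℕ) = j + 1 ∧ (k : ℕ) = j)) : sw n j k < sw n j i := by
  rw [Fin.lt_def] at hik ⊢
  rw [sw_val hj, sw_val hj]
  split_ifs <;> omega

theorem sw_sw {j : ℕ} (i : Fin n) : sw n j (sw n j i) = i := by
  have := congrArg (fun σ => σ i) (sw_mul_self (n := n) j); simpa using this

theorem conj_entry {j : ℕ} (M : Matrix (Fin n) (Fin n) Fq) (i k : Fin n) :
    (((permGL Fq (sw n j) : GL (Fin n) Fq) : Matrix (Fin n) (Fin n) Fq) * M *
      ((permGL Fq (sw n j) : GL (Fin n) Fq) : Matrix (Fin n) (Fin n) Fq)) i k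
      = M (sw n j i) (sw n j k) := by
  rw [mul_S_val, S_val_mul]

theorem sw_apply_b {j : ℕ} (hj : j + 1 < n) : sw n j (ib hj) = ia hj := by
  rw [sw_eq hj]; exact Equiv.swap_apply_right _ _

theorem sw_apply_a {j : ℕ} (hj : j + 1 < n) : sw n j (ia hj) = ib hj := by
  rw [sw_eq hj]; exact Equiv.swap_apply_left _ _

theorem sBs_mem_borel {j : ℕ} (hj : j + 1 < n) {c : GL (Fin n) Fq}
    (hc : c ∈ borelGL n Fq)
    (hab : (c : Matrix (Fin n) (Fin n) Fq) (ia hj) (ib hj) = 0) :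
    permGL Fq (sw n j) * c * permGL Fq (sw n j) ∈ borelGL n Fq := by
  rw [mem_borel_iff]
  intro i k hik
  have hval : ((permGL Fq (sw n j) * c * permGL Fq (sw n j) : GL (Fin n) Fq) :
      Matrix (Fin n) (Fin n) Fq) i k
      = (c : Matrix (Fin n) (Fin n) Fq) (sw n j i) (sw n j k) := by
    rw [Units.val_mul, Units.val_mul, conj_entry]
  rw [hval]
  by_cases hne : (i : ℕ) = j + 1 ∧ (k : ℕ) = j
  · have hi : i = ib hj := Fin.ext hne.1
    have hk : k = ia hj := Fin.ext hne.2
    rw [hi, hk, sw_apply_b hj, sw_apply_a hj, hab]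
  · exact mem_borel_iff.mp hc _ _ (sw_lt hj hik hne)

theorem elemGL_mul_val {j : ℕ} (hj : j + 1 < n) (t : Fq) (M : Matrix (Fin n) (Fin n) Fq)
    (r k : Fin n) :
    (((elemGL hj t : GL (Fin n) Fq) : Matrix (Fin n) (Fin n) Fq) * M) r k
      = M r k + (if r = ia hj then t * M (ib hj) k else 0) := by
  rw [elemGL_val, add_mul, one_mul, Matrix.add_apply]
  congr 1
  by_cases hr : r = ia hj
  · subst hr
    rw [if_pos rfl, Matrix.single_mul_apply_same]
  · rw [if_neg hr]
    exact Matrix.single_mul_apply_of_ne _ _ _ _ _ hr _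

theorem val_elemGL_mul {j : ℕ} (hj : j + 1 < n) (t : Fq) (M : Matrix (Fin n) (Fin n) Fq)
    (r k : Fin n) :
    (M * ((elemGL hj t : GL (Fin n) Fq) : Matrix (Fin n) (Fin n) Fq)) r k
      = M r k + (if k = ib hj then M r (ia hj) * t else 0) := by
  rw [elemGL_val, mul_add, mul_one, Matrix.add_apply]
  congr 1
  by_cases hk : k = ib hj
  · subst hk
    rw [if_pos rfl, Matrix.mul_single_apply_same]
  · rw [if_neg hk]
    exact Matrix.mul_single_apply_of_ne _ _ _ _ _ hk _

theorem miniP_bruhat {j : ℕ} (hj : j + 1 < n) {m : GL (Fin n) Fq} (hm : m ∈ miniP n Fq j) :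
    m ∈ borelGL n Fq ∨
      ∃ b1 ∈ borelGL n Fq, ∃ b2 ∈ borelGL n Fq, m = b1 * permGL Fq (sw n j) * b2 := by
  set M : Matrix (Fin n) (Fin n) Fq := (m : Matrix (Fin n) (Fin n) Fq) with hM
  by_cases hx : M (ib hj) (ia hj) = 0
  · left
    rw [mem_borel_iff]
    intro i k hik
    by_cases hne : (i : ℕ) = j + 1 ∧ (k : ℕ) = j
    · have hi : i = ib hj := Fin.ext hne.1
      have hk : k = ia hj := Fin.ext hne.2
      rw [hi, hk]; exact hx
    · exact mem_miniP_iff.mp hm _ _ (bj_lt_of hik hne)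
  · right
    set t : Fq := M (ia hj) (ia hj) / M (ib hj) (ia hj) with ht
    set b2 : GL (Fin n) Fq := (permGL Fq (sw n j))⁻¹ * (elemGL hj t)⁻¹ * m with hb2
    have hb2val : (b2 : Matrix (Fin n) (Fin n) Fq)
        = ((permGL Fq (sw n j) : GL (Fin n) Fq) : Matrix (Fin n) (Fin n) Fq) *
          (((elemGL hj (-t) : GL (Fin n) Fq) : Matrix (Fin n) (Fin n) Fq) * M) := by
      rw [hb2, S_inv, elemGL_inv, Units.val_mul, Units.val_mul, mul_assoc]
    have hmem := mem_miniP_iff.mp hm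
    have hb2mem : b2 ∈ borelGL n Fq := by
      rw [mem_borel_iff]
      intro i k hik
      rw [hb2val, S_val_mul, elemGL_mul_val]
      by_cases hib : i = ib hj
      · subst hib
        rw [sw_apply_b hj, if_pos rfl]
        rcases eq_or_ne k (ia hj) with rfl | hka
        · rw [ht, neg_mul, div_mul_cancel₀ _ hx, add_neg_cancel]
        · have hkj : (k : ℕ) < j := by
            have h1 : (k : ℕ) < j + 1 := hik
            have h2 : (k : ℕ) ≠ j := fun h => hka (Fin.ext h)
            omega
          have e1 : M (ia hj) k = 0 := by
            apply hmem
            rw [show bj j (ia hj) = j from if_neg (by rw [ia_val]; omega),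
              show bj j k = (k : ℕ) from if_neg (by omega)]
            exact hkj
          have e2 : M (ib hj) k = 0 := by
            apply hmem
            simp only [bj, ib_val]
            split_ifs <;> omega
          rw [e1, e2]; ring
      · have hswi : sw n j i ≠ ia hj := by
          intro h
          have h2 := congrArg (sw n j) h
          rw [sw_sw, sw_apply_a hj] at h2
          exact hib h2
        rw [if_neg hswi, add_zero]
        apply hmem
        rw [bj_sw hj]
        exact bj_lt_of hik (fun h => hib (Fin.ext h.1))
    refine ⟨elemGL hj t, elemGL_mem_borel hj t, b2, hb2mem, ?_⟩
    rw [hb2]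
    group

end Stmt12
namespace Stmt12

open Finset

variable {n : ℕ} {Fq : Type*} [Field Fq] [DecidableEq Fq]

theorem flag_mk_eq {x y : GL (Fin n) Fq} :
    (Quotient.mk (QuotientGroup.rightRel (borelGL n Fq)) x : FlagIdx n Fq)
      = Quotient.mk (QuotientGroup.rightRel (borelGL n Fq)) y
    ↔ y * x⁻¹ ∈ borelGL n Fq := by
  constructor
  · intro h
    exact QuotientGroup.rightRel_apply.mp (Quotient.exact h)
  · intro h
    exact Quotient.sound (QuotientGroup.rightRel_apply.mpr h)

theorem flag_eq_mk_iff {c : FlagIdx n Fq} {g : GL (Fin n) Fq} :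
    c = Quotient.mk (QuotientGroup.rightRel (borelGL n Fq)) g
    ↔ (Quotient.out c) * g⁻¹ ∈ borelGL n Fq := by
  constructor
  · intro h
    have h2 : (Quotient.mk (QuotientGroup.rightRel (borelGL n Fq)) (Quotient.out c) :
        FlagIdx n Fq) = Quotient.mk (QuotientGroup.rightRel (borelGL n Fq)) g := by
      rw [Quotient.out_eq]; exact h
    have := flag_mk_eq.mp h2
    have h3 := inv_mem this
    rwa [_root_.mul_inv_rev, inv_inv] at h3
  · intro h
    rw [← Quotient.out_eq c]
    apply flag_mk_eq.mpr
    have h3 := inv_mem h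
    rwa [_root_.mul_inv_rev, inv_inv] at h3

theorem elemGL_mul {j : ℕ} (hj : j + 1 < n) (t t' : Fq) :
    elemGL hj t * elemGL hj t' = elemGL hj (t + t') := by
  ext : 1
  show ((elemGL hj t : GL (Fin n) Fq) : Matrix (Fin n) (Fin n) Fq) *
    ((elemGL hj t' : GL (Fin n) Fq) : Matrix (Fin n) (Fin n) Fq) = _
  rw [elemGL_val, elemGL_val, elemGL_val]
  have h0 : Matrix.single (ia hj) (ib hj) t *
      Matrix.single (ia hj) (ib hj) t' = 0 :=
    Matrix.single_mul_single_of_ne _ _ _ _ (ne_of_gt (ia_lt_ib hj)) _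
  rw [mul_add, add_mul, add_mul, h0, mul_one, one_mul, add_zero, mul_one,
    add_assoc, ← Matrix.single_add]

variable [Fintype Fq]

open scoped Classical

theorem mk_Sut_ne {j : ℕ} (hj : j + 1 < n) (g' : GL (Fin n) Fq) (t : Fq) :
    (Quotient.mk (QuotientGroup.rightRel (borelGL n Fq))
        (permGL Fq (sw n j) * elemGL hj t * g') : FlagIdx n Fq)
      ≠ Quotient.mk (QuotientGroup.rightRel (borelGL n Fq)) g' := by
  intro h
  have hB := flag_mk_eq.mp h
  have hid : g' * (permGL Fq (sw n j) * elemGL hj t * g')⁻¹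
      = (elemGL hj t)⁻¹ * (permGL Fq (sw n j))⁻¹ := by group
  rw [hid, elemGL_inv, S_inv] at hB
  have : permGL Fq (sw n j) ∈ borelGL n Fq := by
    have := mul_mem (inv_mem (elemGL_mem_borel hj (-t))) hB
    rwa [← mul_assoc, inv_mul_cancel, one_mul] at this
  exact S_not_mem_borel hj this

theorem mk_Sut_inj {j : ℕ} (hj : j + 1 < n) (g' : GL (Fin n) Fq) :
    Function.Injective (fun t : Fq =>
      (Quotient.mk (QuotientGroup.rightRel (borelGL n Fq))
        (permGL Fq (sw n j) * elemGL hj t * g') : FlagIdx n Fq)) := by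
  intro t t' h
  simp only at h
  have hB := flag_mk_eq.mp h
  have hid : permGL Fq (sw n j) * elemGL hj t' * g' *
      (permGL Fq (sw n j) * elemGL hj t * g')⁻¹
      = permGL Fq (sw n j) * (elemGL hj t' * (elemGL hj t)⁻¹) * (permGL Fq (sw n j))⁻¹ := by
    group
  rw [hid, elemGL_inv, elemGL_mul, S_inv] at hB
  have hentry := mem_borel_iff.mp hB (ib hj) (ia hj) (ia_lt_ib hj)
  rw [Units.val_mul, Units.val_mul, conj_entry, sw_apply_b hj, sw_apply_a hj,
    elemGL_val, Matrix.add_apply, Matrix.one_apply_ne (ne_of_lt (ia_lt_ib hj)),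
    Matrix.single_apply_same, zero_add] at hentry
  have : t = t' := by linear_combination -hentry
  exact this

theorem coset_filter_eq {j : ℕ} (hj : j + 1 < n) (g' : GL (Fin n) Fq) :
    Finset.univ.filter (fun c : FlagIdx n Fq => Quotient.out c * g'⁻¹ ∈ miniP n Fq j)
      = insert (Quotient.mk (QuotientGroup.rightRel (borelGL n Fq)) g')
          ((Finset.univ : Finset Fq).image fun t =>
            Quotient.mk (QuotientGroup.rightRel (borelGL n Fq))
              (permGL Fq (sw n j) * elemGL hj t * g')) := by
  ext c
  simp only [Finset.mem_filter, Finset.mem_univ, true_and, Finset.mem_insert,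
    Finset.mem_image]
  constructor
  · intro hmem
    rcases miniP_bruhat hj hmem with hB | ⟨b1, hb1, b2, hb2, heq⟩
    · left; exact flag_eq_mk_iff.mpr hB
    · right
      set t : Fq := (b2 : Matrix (Fin n) (Fin n) Fq) (ia hj) (ib hj) /
        (b2 : Matrix (Fin n) (Fin n) Fq) (ia hj) (ia hj) with ht
      refine ⟨t, ?_⟩
      symm
      apply flag_eq_mk_iff.mpr
      have hkey : Quotient.out c * (permGL Fq (sw n j) * elemGL hj t * g')⁻¹
          = (Quotient.out c * g'⁻¹) * (elemGL hj t)⁻¹ * (permGL Fq (sw n j))⁻¹ := by group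
      rw [hkey, heq, elemGL_inv, S_inv]
      have hassoc : b1 * permGL Fq (sw n j) * b2 * elemGL hj (-t) * permGL Fq (sw n j)
          = b1 * (permGL Fq (sw n j) * (b2 * elemGL hj (-t)) * permGL Fq (sw n j)) := by
        group
      rw [hassoc]
      have hne : (b2 : Matrix (Fin n) (Fin n) Fq) (ia hj) (ia hj) ≠ 0 :=
        borel_diag_ne_zero hb2 _
      have hentry : ((b2 * elemGL hj (-t) : GL (Fin n) Fq) :
          Matrix (Fin n) (Fin n) Fq) (ia hj) (ib hj) = 0 := by
        rw [Units.val_mul, val_elemGL_mul, if_pos rfl, mul_neg,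
          mul_comm ((b2 : Matrix (Fin n) (Fin n) Fq) (ia hj) (ia hj)) t, ht,
          div_mul_cancel₀ _ hne, add_neg_cancel]
      exact mul_mem hb1 (sBs_mem_borel hj (mul_mem hb2 (elemGL_mem_borel hj (-t))) hentry)
  · intro h
    rcases h with h | ⟨t, h⟩
    · subst h
      exact borel_le_miniP (flag_eq_mk_iff.mp rfl)
    · have hB : Quotient.out c * (permGL Fq (sw n j) * elemGL hj t * g')⁻¹
          ∈ borelGL n Fq := flag_eq_mk_iff.mp h.symm
      have hid : Quotient.out c * g'⁻¹
          = (Quotient.out c * (permGL Fq (sw n j) * elemGL hj t * g')⁻¹) *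
            permGL Fq (sw n j) * elemGL hj t := by group
      rw [hid]
      exact mul_mem (mul_mem (borel_le_miniP hB) (S_mem_miniP hj))
        (borel_le_miniP (elemGL_mem_borel hj t))

theorem card_coset_filter {j : ℕ} (hj : j + 1 < n) (g' : GL (Fin n) Fq) :
    (Finset.univ.filter (fun c : FlagIdx n Fq =>
      Quotient.out c * g'⁻¹ ∈ miniP n Fq j)).card = Fintype.card Fq + 1 := by
  rw [coset_filter_eq hj g']
  rw [Finset.card_insert_of_notMem]
  · rw [Finset.card_image_of_injective _ (mk_Sut_inj hj g'), Finset.card_univ]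
  · intro hmem
    rcases Finset.mem_image.mp hmem with ⟨t, -, h⟩
    exact mk_Sut_ne hj g' t h

end Stmt12
namespace Stmt12

open Finset

variable {n : ℕ} {Fq : Type*} [Field Fq] [Fintype Fq] [DecidableEq Fq]
  {F : Type*} [Field F]

open scoped Classical

theorem flagT_apply (j : ℕ) (v : FlagIdx n Fq →₀ F) (c' : FlagIdx n Fq) :
    flagT n Fq F j v c' = ∑ c ∈ Finset.univ.filter (fun c : FlagIdx n Fq =>
      ∃ b ∈ borelGL n Fq, ∃ b' ∈ borelGL n Fq,
        (Quotient.out c' : GL (Fin n) Fq)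
          = b * permGL Fq (sw n j) * b' * Quotient.out c), v c := by
  rw [Finset.sum_filter]
  simp only [flagT, Finsupp.lsum_apply, Finsupp.sum_apply, LinearMap.toSpanSingleton_apply,
    Finsupp.smul_apply, Finsupp.finset_sum_apply, Finsupp.single_apply]
  rw [Finsupp.sum_fintype _ _ (fun c => by simp)]
  apply Finset.sum_congr rfl
  intro c _
  rw [Finset.sum_ite_eq' _ c' (fun _ => (1 : F))]
  by_cases h : c' ∈ Finset.univ.filter (fun c'' : FlagIdx n Fq =>
      ∃ b ∈ borelGL n Fq, ∃ b' ∈ borelGL n Fq,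
        (Quotient.out c'' : GL (Fin n) Fq)
          = b * permGL Fq (sw n j) * b' * Quotient.out c)
  · have hp := (Finset.mem_filter.mp h).2
    rw [if_pos, if_pos hp, smul_eq_mul, mul_one]
    convert h using 2
  · have hp : ¬ (∃ b ∈ borelGL n Fq, ∃ b' ∈ borelGL n Fq,
        (Quotient.out c' : GL (Fin n) Fq)
          = b * permGL Fq (sw n j) * b' * Quotient.out c) :=
      fun hh => h (Finset.mem_filter.mpr ⟨Finset.mem_univ _, hh⟩)
    rw [if_neg, if_neg hp, smul_eq_mul, mul_zero]
    convert h using 2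

theorem rel_iff {j : ℕ} (hj : j + 1 < n) {c c' : FlagIdx n Fq} :
    (∃ b ∈ borelGL n Fq, ∃ b' ∈ borelGL n Fq,
      (Quotient.out c' : GL (Fin n) Fq)
        = b * permGL Fq (sw n j) * b' * Quotient.out c)
    ↔ (Quotient.out c * (Quotient.out c' : GL (Fin n) Fq)⁻¹ ∈ miniP n Fq j ∧ c ≠ c') := by
  constructor
  · rintro ⟨b, hb, b', hb', heq⟩
    have h1 : (Quotient.out c' : GL (Fin n) Fq) * (Quotient.out c)⁻¹
        = b * permGL Fq (sw n j) * b' := by rw [heq]; group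
    have h2 : (Quotient.out c' : GL (Fin n) Fq) * (Quotient.out c)⁻¹ ∈ miniP n Fq j := by
      rw [h1]
      exact mul_mem (mul_mem (borel_le_miniP hb) (S_mem_miniP hj)) (borel_le_miniP hb')
    constructor
    · have h3 := inv_mem h2
      rwa [_root_.mul_inv_rev, inv_inv] at h3
    · rintro rfl
      have h0 : (1 : GL (Fin n) Fq) = b * permGL Fq (sw n j) * b' := by
        rw [← h1, mul_inv_cancel]
      have h4 : permGL Fq (sw n j) = b⁻¹ * 1 * b'⁻¹ := by rw [h0]; group
      rw [mul_one] at h4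
      exact S_not_mem_borel hj (h4 ▸ mul_mem (inv_mem hb) (inv_mem hb'))
  · rintro ⟨hmem, hne⟩
    have hm : (Quotient.out c' : GL (Fin n) Fq) * (Quotient.out c)⁻¹ ∈ miniP n Fq j := by
      have h3 := inv_mem hmem
      rwa [_root_.mul_inv_rev, inv_inv] at h3
    rcases miniP_bruhat hj hm with hB | ⟨b1, hb1, b2, hb2, heq⟩
    · exfalso
      apply hne
      have : (Quotient.mk (QuotientGroup.rightRel (borelGL n Fq)) (Quotient.out c) :
          FlagIdx n Fq) = Quotient.mk (QuotientGroup.rightRel (borelGL n Fq))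
            (Quotient.out c') := flag_mk_eq.mpr hB
      rwa [Quotient.out_eq, Quotient.out_eq] at this
    · refine ⟨b1, hb1, b2, hb2, ?_⟩
      have : (Quotient.out c' : GL (Fin n) Fq)
          = (Quotient.out c' * (Quotient.out c)⁻¹) * Quotient.out c := by group
      rw [this, heq]

theorem ker_iff {j : ℕ} (hj : j + 1 < n) (hq : (Fintype.card Fq : F) = 0)
    (v : FlagIdx n Fq →₀ F) :
    flagT n Fq F j v = 0 ↔ ∀ c c' : FlagIdx n Fq,
      Quotient.out c * (Quotient.out c' : GL (Fin n) Fq)⁻¹ ∈ miniP n Fq j →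
        v c = v c' := by
  set X : FlagIdx n Fq → Finset (FlagIdx n Fq) := fun c' =>
    Finset.univ.filter (fun c => Quotient.out c * (Quotient.out c' : GL (Fin n) Fq)⁻¹
      ∈ miniP n Fq j) with hX
  have hXmem : ∀ c', c' ∈ X c' := fun c' => Finset.mem_filter.mpr
    ⟨Finset.mem_univ _, by rw [mul_inv_cancel]; exact one_mem _⟩
  have hcoef : ∀ c', flagT n Fq F j v c' = ∑ c ∈ (X c').erase c', v c := by
    intro c'
    rw [flagT_apply]
    congr 1
    ext c
    simp only [Finset.mem_filter, Finset.mem_univ, true_and, Finset.mem_erase, hX]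
    rw [rel_iff hj]
    tauto
  have hXeq : ∀ c c', c ∈ X c' → X c = X c' := by
    intro c c' hc
    have hrel : Quotient.out c * (Quotient.out c' : GL (Fin n) Fq)⁻¹ ∈ miniP n Fq j :=
      (Finset.mem_filter.mp hc).2
    ext d
    simp only [Finset.mem_filter, Finset.mem_univ, true_and, hX]
    constructor
    · intro hd
      have h2 := mul_mem hd hrel
      rwa [mul_assoc, inv_mul_cancel_left] at h2
    · intro hd
      have h2 := mul_mem hd (inv_mem hrel)
      rw [_root_.mul_inv_rev, inv_inv] at h2
      rwa [mul_assoc, inv_mul_cancel_left] at h2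
  constructor
  · intro hv c c' hrel
    have hzero : ∀ c'', flagT n Fq F j v c'' = 0 := fun c'' => by rw [hv]; rfl
    have e1 : v c' = ∑ x ∈ X c', v x := by
      have := hzero c'
      rw [hcoef c', Finset.sum_erase_eq_sub (hXmem c')] at this
      linear_combination -this
    have e2 : v c = ∑ x ∈ X c, v x := by
      have := hzero c
      rw [hcoef c, Finset.sum_erase_eq_sub (hXmem c)] at this
      linear_combination -this
    have hcX : c ∈ X c' := Finset.mem_filter.mpr ⟨Finset.mem_univ _, hrel⟩
    rw [e1, e2, hXeq c c' hcX]
  · intro hv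
    ext c'
    rw [hcoef c', Finsupp.coe_zero, Pi.zero_apply]
    have hconst : ∀ c ∈ (X c').erase c', v c = v c' := by
      intro c hc
      exact hv c c' (Finset.mem_filter.mp (Finset.mem_erase.mp hc).2).2
    rw [Finset.sum_congr rfl hconst, Finset.sum_const, Finset.card_erase_of_mem (hXmem c')]
    have hcard : (X c').card = Fintype.card Fq + 1 := card_coset_filter hj (Quotient.out c')
    rw [hcard, Nat.add_sub_cancel, nsmul_eq_mul, hq, zero_mul]

end Stmt12
namespace Stmt12

open Finset

variable {n : ℕ} {Fq : Type*} [Field Fq] [Fintype Fq] [DecidableEq Fq]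
  {F : Type*} [Field F]

open scoped Classical

theorem borel_le_parab {J : Finset ℕ} : borelGL n Fq ≤ parab n Fq J := le_sup_left

theorem S_mem_parab {J : Finset ℕ} {j : ℕ} (hj : j + 1 < n) (hjJ : j ∉ J) :
    permGL Fq (sw n j) ∈ parab n Fq J :=
  SetLike.le_def.mp le_sup_right (Subgroup.subset_closure
    (show permGL Fq (sw n j) ∈
      {g : GL (Fin n) Fq | ∃ j : ℕ, j + 1 < n ∧ j ∉ J ∧ g = permGL Fq (sw n j)}
      from ⟨j, hj, hjJ, rfl⟩))

theorem miniP_le_parab {J : Finset ℕ} {j : ℕ} (hj : j + 1 < n) (hjJ : j ∉ J)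
    {m : GL (Fin n) Fq} (hm : m ∈ miniP n Fq j) : m ∈ parab n Fq J := by
  rcases miniP_bruhat hj hm with hB | ⟨b1, hb1, b2, hb2, heq⟩
  · exact borel_le_parab hB
  · rw [heq]
    exact mul_mem (mul_mem (borel_le_parab hb1) (S_mem_parab hj hjJ)) (borel_le_parab hb2)

theorem parab_mk_eq {J : Finset ℕ} {x y : GL (Fin n) Fq} :
    (Quotient.mk (QuotientGroup.rightRel (parab n Fq J)) x)
      = Quotient.mk (QuotientGroup.rightRel (parab n Fq J)) y
    ↔ y * x⁻¹ ∈ parab n Fq J := by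
  constructor
  · intro h
    exact QuotientGroup.rightRel_apply.mp (Quotient.exact h)
  · intro h
    exact Quotient.sound (QuotientGroup.rightRel_apply.mpr h)

/-- The projection from `B\G` to `P_J\G`. -/
noncomputable def toParab (n : ℕ) (Fq : Type*) [Field Fq] [DecidableEq Fq] (J : Finset ℕ) :
    FlagIdx n Fq → Quotient (QuotientGroup.rightRel (parab n Fq J)) :=
  fun c => Quotient.mk _ (Quotient.out c)

theorem toParab_mk {J : Finset ℕ} (g : GL (Fin n) Fq) :
    toParab n Fq J (Quotient.mk (QuotientGroup.rightRel (borelGL n Fq)) g)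
      = Quotient.mk (QuotientGroup.rightRel (parab n Fq J)) g := by
  apply parab_mk_eq.mpr
  have h1 : (Quotient.out (Quotient.mk (QuotientGroup.rightRel (borelGL n Fq)) g :
      FlagIdx n Fq)) * g⁻¹ ∈ borelGL n Fq := flag_eq_mk_iff.mp rfl
  have h2 := inv_mem h1
  rw [_root_.mul_inv_rev, inv_inv] at h2
  exact borel_le_parab h2

theorem toParab_eq_iff {J : Finset ℕ} {c c' : FlagIdx n Fq} :
    toParab n Fq J c = toParab n Fq J c'
      ↔ Quotient.out c * (Quotient.out c' : GL (Fin n) Fq)⁻¹ ∈ parab n Fq J := by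
  unfold toParab
  rw [parab_mk_eq]
  constructor
  · intro h
    have h2 := inv_mem h
    rwa [_root_.mul_inv_rev, inv_inv] at h2
  · intro h
    have h2 := inv_mem h
    rwa [_root_.mul_inv_rev, inv_inv] at h2

theorem toParab_surjective {J : Finset ℕ} : Function.Surjective (toParab n Fq J) := by
  intro y
  refine ⟨Quotient.mk (QuotientGroup.rightRel (borelGL n Fq)) (Quotient.out y), ?_⟩
  rw [toParab_mk, Quotient.out_eq]

theorem mem_iInf_ker_iff (hn : 1 ≤ n) {J : Finset ℕ} (hq : (Fintype.card Fq : F) = 0)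
    (v : FlagIdx n Fq →₀ F) :
    (v ∈ ⨅ j ∈ Finset.range (n - 1) \ J, LinearMap.ker (flagT n Fq F j)) ↔
    ∀ c c' : FlagIdx n Fq, toParab n Fq J c = toParab n Fq J c' → v c = v c' := by
  simp only [Submodule.mem_iInf, LinearMap.mem_ker]
  constructor
  · intro hv c c' hπ
    have hP : Quotient.out c * (Quotient.out c' : GL (Fin n) Fq)⁻¹ ∈ parab n Fq J :=
      toParab_eq_iff.mp hπ
    set H : Subgroup (GL (Fin n) Fq) :=
      { carrier := {x | ∀ g : GL (Fin n) Fq,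
          v (Quotient.mk (QuotientGroup.rightRel (borelGL n Fq)) (x * g))
            = v (Quotient.mk (QuotientGroup.rightRel (borelGL n Fq)) g)}
        one_mem' := fun g => by rw [one_mul]
        mul_mem' := fun {x y} hx hy g => by rw [mul_assoc, hx (y * g), hy g]
        inv_mem' := fun {x} hx g => by
          have h1 := hx (x⁻¹ * g)
          rw [mul_inv_cancel_left] at h1
          exact h1.symm } with hH
    have hBH : borelGL n Fq ≤ H := by
      intro x hx g
      have hid : g * (x * g)⁻¹ = x⁻¹ := by group
      have hmem : g * (x * g)⁻¹ ∈ borelGL n Fq := by rw [hid]; exact inv_mem hx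
      exact congrArg v (flag_mk_eq.mpr hmem)
    have hSH : ∀ j, j ∈ Finset.range (n - 1) \ J → permGL Fq (sw n j) ∈ H := by
      intro j hjmem
      have hj : j + 1 < n := by
        have := Finset.mem_range.mp (Finset.mem_sdiff.mp hjmem).1
        omega
      intro g
      apply (ker_iff hj hq v).mp (hv j hjmem)
      have h1 : (Quotient.out (Quotient.mk (QuotientGroup.rightRel (borelGL n Fq))
          (permGL Fq (sw n j) * g) : FlagIdx n Fq)) * (permGL Fq (sw n j) * g)⁻¹
          ∈ borelGL n Fq := flag_eq_mk_iff.mp rfl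
      have h2 : (Quotient.out (Quotient.mk (QuotientGroup.rightRel (borelGL n Fq)) g :
          FlagIdx n Fq)) * g⁻¹ ∈ borelGL n Fq := flag_eq_mk_iff.mp rfl
      have h2' := inv_mem h2
      rw [_root_.mul_inv_rev, inv_inv] at h2'
      have hid : (Quotient.out (Quotient.mk (QuotientGroup.rightRel (borelGL n Fq))
          (permGL Fq (sw n j) * g) : FlagIdx n Fq))
          * (Quotient.out (Quotient.mk (QuotientGroup.rightRel (borelGL n Fq)) g :
            FlagIdx n Fq))⁻¹
          = ((Quotient.out (Quotient.mk (QuotientGroup.rightRel (borelGL n Fq))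
              (permGL Fq (sw n j) * g) : FlagIdx n Fq)) * (permGL Fq (sw n j) * g)⁻¹)
            * permGL Fq (sw n j)
            * (g * (Quotient.out (Quotient.mk (QuotientGroup.rightRel (borelGL n Fq)) g :
              FlagIdx n Fq))⁻¹) := by group
      rw [hid]
      exact mul_mem (mul_mem (borel_le_miniP h1) (S_mem_miniP hj)) (borel_le_miniP h2')
    have hPH : parab n Fq J ≤ H := by
      apply sup_le hBH
      apply (Subgroup.closure_le H).mpr
      rintro x ⟨j, hj, hjJ, rfl⟩
      exact hSH j (Finset.mem_sdiff.mpr ⟨Finset.mem_range.mpr (by omega), hjJ⟩)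
    have hx := hPH hP
    have hout : (Quotient.out c * (Quotient.out c' : GL (Fin n) Fq)⁻¹) * Quotient.out c'
        = Quotient.out c := by group
    have := hx (Quotient.out c')
    rw [hout, Quotient.out_eq, Quotient.out_eq] at this
    exact this
  · intro hv j hjmem
    have hj : j + 1 < n := by
      have := Finset.mem_range.mp (Finset.mem_sdiff.mp hjmem).1
      omega
    have hjJ : j ∉ J := (Finset.mem_sdiff.mp hjmem).2
    apply (ker_iff hj hq v).mpr
    intro c c' hrel
    exact hv c c' (toParab_eq_iff.mpr (miniP_le_parab hj hjJ hrel))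

end Stmt12
namespace Stmt12

open Finset

variable {n : ℕ} {Fq : Type*} [Field Fq] [Fintype Fq] [DecidableEq Fq]
  {F : Type*} [Field F]

open scoped Classical

theorem toParab_eq_mk_iff {J : Finset ℕ} {c : FlagIdx n Fq} {g : GL (Fin n) Fq} :
    toParab n Fq J c = Quotient.mk (QuotientGroup.rightRel (parab n Fq J)) g
      ↔ (Quotient.out c : GL (Fin n) Fq) * g⁻¹ ∈ parab n Fq J := by
  unfold toParab
  rw [parab_mk_eq]
  constructor
  · intro h
    have h2 := inv_mem h
    rwa [_root_.mul_inv_rev, inv_inv] at h2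
  · intro h
    have h2 := inv_mem h
    rwa [_root_.mul_inv_rev, inv_inv] at h2

theorem u_apply {J : Finset ℕ} (g : GL (Fin n) Fq) (c : FlagIdx n Fq) :
    (∑ c' ∈ Finset.univ.filter (fun c' : FlagIdx n Fq =>
        (Quotient.out c' : GL (Fin n) Fq) * g⁻¹ ∈ parab n Fq J),
      Finsupp.single c' (1 : F)) c
    = if toParab n Fq J c = Quotient.mk (QuotientGroup.rightRel (parab n Fq J)) g
      then (1 : F) else 0 := by
  rw [Finsupp.finset_sum_apply]
  have : ∀ c' ∈ Finset.univ.filter (fun c' : FlagIdx n Fq =>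
      (Quotient.out c' : GL (Fin n) Fq) * g⁻¹ ∈ parab n Fq J),
      (Finsupp.single c' (1 : F)) c = if c' = c then (1 : F) else 0 :=
    fun c' _ => Finsupp.single_apply
  rw [Finset.sum_congr rfl this, Finset.sum_ite_eq' _ c (fun _ => (1 : F))]
  congr 1
  simp only [Finset.mem_filter, Finset.mem_univ, true_and, eq_iff_iff]
  exact (toParab_eq_mk_iff).symm

theorem span_eq (hn : 1 ≤ n) {J : Finset ℕ} (hq : (Fintype.card Fq : F) = 0) :
    (⨅ j ∈ Finset.range (n - 1) \ J, LinearMap.ker (flagT n Fq F j)) =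
      Submodule.span F (Set.range fun g : GL (Fin n) Fq =>
        ∑ c ∈ Finset.univ.filter (fun c : FlagIdx n Fq =>
            (Quotient.out c : GL (Fin n) Fq) * g⁻¹ ∈ parab n Fq J),
          Finsupp.single c (1 : F)) := by
  haveI : Fintype (Quotient (QuotientGroup.rightRel (parab n Fq J))) := Fintype.ofFinite _
  apply le_antisymm
  · intro v hv
    rw [mem_iInf_ker_iff hn hq] at hv
    have hv_eq : v = ∑ y : Quotient (QuotientGroup.rightRel (parab n Fq J)),
        v (Quotient.mk (QuotientGroup.rightRel (borelGL n Fq)) (Quotient.out y)) •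
          (∑ c ∈ Finset.univ.filter (fun c : FlagIdx n Fq =>
            (Quotient.out c : GL (Fin n) Fq) * (Quotient.out y)⁻¹ ∈ parab n Fq J),
          Finsupp.single c (1 : F)) := by
      ext c
      rw [Finsupp.finset_sum_apply]
      have hterm : ∀ y ∈ (Finset.univ : Finset (Quotient (QuotientGroup.rightRel
          (parab n Fq J)))),
          (v (Quotient.mk (QuotientGroup.rightRel (borelGL n Fq)) (Quotient.out y)) •
            (∑ c' ∈ Finset.univ.filter (fun c' : FlagIdx n Fq =>
              (Quotient.out c' : GL (Fin n) Fq) * (Quotient.out y)⁻¹ ∈ parab n Fq J),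
            Finsupp.single c' (1 : F))) c
          = if y = toParab n Fq J c then
              v (Quotient.mk (QuotientGroup.rightRel (borelGL n Fq)) (Quotient.out y))
            else 0 := by
        intro y _
        rw [Finsupp.smul_apply, u_apply, Quotient.out_eq]
        by_cases h : toParab n Fq J c = y
        · rw [if_pos h, if_pos h.symm, smul_eq_mul, mul_one]
        · rw [if_neg h, if_neg (fun hh => h hh.symm), smul_eq_mul, mul_zero]
      rw [Finset.sum_congr rfl hterm, Finset.sum_ite_eq' _ (toParab n Fq J c) _]
      rw [if_pos (Finset.mem_univ _)]
      apply hv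
      rw [toParab_mk, Quotient.out_eq]
    rw [hv_eq]
    apply Submodule.sum_mem
    intro y _
    apply Submodule.smul_mem
    exact Submodule.subset_span ⟨Quotient.out y, rfl⟩
  · rw [Submodule.span_le]
    rintro _ ⟨g, rfl⟩
    rw [SetLike.mem_coe, mem_iInf_ker_iff hn hq]
    intro c c' hcc
    rw [u_apply, u_apply, hcc]

theorem finrank_eq (hn : 1 ≤ n) {J : Finset ℕ} (hq : (Fintype.card Fq : F) = 0) :
    Module.finrank F
        ↥(⨅ j ∈ Finset.range (n - 1) \ J, LinearMap.ker (flagT n Fq F j))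
      = Nat.card (Quotient (QuotientGroup.rightRel (parab n Fq J))) := by
  haveI : Fintype (Quotient (QuotientGroup.rightRel (parab n Fq J))) := Fintype.ofFinite _
  set w : Quotient (QuotientGroup.rightRel (parab n Fq J)) → (FlagIdx n Fq →₀ F) :=
    fun y => ∑ c ∈ Finset.univ.filter (fun c : FlagIdx n Fq =>
        (Quotient.out c : GL (Fin n) Fq) * (Quotient.out y)⁻¹ ∈ parab n Fq J),
      Finsupp.single c (1 : F) with hw
  have hw_apply : ∀ y c, w y c = if toParab n Fq J c = y then (1 : F) else 0 := by
    intro y c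
    rw [hw]
    simp only
    rw [u_apply, Quotient.out_eq]
  have hrange : (Set.range fun g : GL (Fin n) Fq =>
      ∑ c ∈ Finset.univ.filter (fun c : FlagIdx n Fq =>
          (Quotient.out c : GL (Fin n) Fq) * g⁻¹ ∈ parab n Fq J),
        Finsupp.single c (1 : F)) = Set.range w := by
    ext x
    constructor
    · rintro ⟨g, rfl⟩
      refine ⟨Quotient.mk (QuotientGroup.rightRel (parab n Fq J)) g, ?_⟩
      ext c
      rw [hw_apply, u_apply]
    · rintro ⟨y, rfl⟩
      exact ⟨Quotient.out y, rfl⟩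
  have hli : LinearIndependent F w := by
    rw [Fintype.linearIndependent_iff]
    intro a ha y₀
    have hev := congrArg (fun f : FlagIdx n Fq →₀ F =>
      f (Quotient.mk (QuotientGroup.rightRel (borelGL n Fq)) (Quotient.out y₀))) ha
    rw [Finsupp.finset_sum_apply] at hev
    have hterm : ∀ y ∈ (Finset.univ : Finset (Quotient (QuotientGroup.rightRel
        (parab n Fq J)))),
        (a y • w y) (Quotient.mk (QuotientGroup.rightRel (borelGL n Fq))
          (Quotient.out y₀))
        = if y = y₀ then a y else 0 := by
      intro y _
      rw [Finsupp.smul_apply, hw_apply]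
      rw [toParab_mk, Quotient.out_eq]
      by_cases h : y₀ = y
      · rw [if_pos h, if_pos h.symm, smul_eq_mul, mul_one]
      · rw [if_neg h, if_neg (fun hh => h hh.symm), smul_eq_mul, mul_zero]
    rw [Finset.sum_congr rfl hterm, Finset.sum_ite_eq' _ y₀ a, if_pos (Finset.mem_univ _)]
      at hev
    exact hev
  rw [span_eq hn hq, hrange, finrank_span_eq_card hli, Nat.card_eq_fintype_card]

end Stmt12
open scoped Classical in
/-- **From the proof of Theorem 6.2** (the identification `(1_B^G)_α = 1_{P_α}^G`).
Let `q` be a power of a prime `p`, `G = GL(n, F_q)`, `B` the Borel subgroup, and `F` a field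
of characteristic `p`.  For `J ⊆ {1, …, n-1}`, the subspace
`{v ∈ 1_B^G : T_j v = 0 ∀ j ∉ J}` equals the `F`-span of the elements
`u_g = ∑_{C ∈ B\G, C ⊆ P_J g} C`; in particular its dimension is the number of right
`P_J`-cosets in `G`. -/
theorem stmt_12 (n : ℕ) (hn : 1 ≤ n) (p : ℕ) [Fact p.Prime]
    (Fq : Type*) [Field Fq] [Fintype Fq] [DecidableEq Fq] [CharP Fq p]
    (F : Type*) [Field F] [CharP F p]
    (J : Finset ℕ) (hJ : J ⊆ Finset.range (n - 1)) :
    (⨅ j ∈ Finset.range (n - 1) \ J, LinearMap.ker (flagT n Fq F j)) =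
      Submodule.span F (Set.range fun g : GL (Fin n) Fq =>
        ∑ c ∈ Finset.univ.filter (fun c : FlagIdx n Fq =>
            (Quotient.out c : GL (Fin n) Fq) * g⁻¹ ∈ parab n Fq J),
          Finsupp.single c (1 : F)) ∧
    Module.finrank F
        ↥(⨅ j ∈ Finset.range (n - 1) \ J, LinearMap.ker (flagT n Fq F j))
      = Nat.card (Quotient (QuotientGroup.rightRel (parab n Fq J))) := by
  have hq : (Fintype.card Fq : F) = 0 := by
    obtain ⟨k, hp, hcard⟩ := FiniteField.card (K := Fq) p
    rw [hcard]
    push_cast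
    rw [CharP.cast_eq_zero F p]
    exact zero_pow k.2.ne'
  exact ⟨Stmt12.span_eq hn hq, Stmt12.finrank_eq hn hq⟩
end
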